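/- arXiv:2204.13411 — 10 statements merged into one kernel-verified Lean document; each statement's English description precedes it below -/
import Mathlib

section
/- Let T be a bounded linear operator on a complex Banach space with spectral radius at most 1, satisfying the Ritt resolvent condition ‖(zI − T)⁻¹‖ ≤ C/|z − 1| for all |z| > 1 and some constant C. Then T is power-bounded: there exists K such that ‖T^n‖ ≤ K for all n ≥ 0. -/
/-!
Since the spectral radius is at most one, `g u = (1 - u • T)⁻¹ ^ 2 = ∑ (n + 1) uⁿ Tⁿ` is
holomorphic on the unit disc, and Cauchy's estimate on the circle `|u| = s < 1` bounds
`(n + 1) ‖Tⁿ‖` by `s⁻ⁿ` times the mean of `‖g‖` over that circle. As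
`(1 - u • T)⁻¹ = u⁻¹ (u⁻¹ - T)⁻¹`, the Ritt condition gives `‖g u‖ ≤ C² / |1 - u|²`, and the mean
of `1 / |1 - u|²` is a Poisson integral, equal to `1 / (1 - s²)`. Taking
`s = (n + 1) / (n + 2)` yields `‖Tⁿ‖ ≤ e C²`.
-/

open Filter Metric Real
open scoped NNReal ENNReal

section PowerSeries

variable {𝕜 A : Type*} [NontriviallyNormedField 𝕜] [NormedRing A] [NormedAlgebra 𝕜 A]
  [HasSummableGeomSeries A]

open ContinuousMultilinearMap ENNReal in
theorem hasFPowerSeriesOnBall_inverse_one_sub_smul_sq (a : A) :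
    HasFPowerSeriesOnBall (fun z : 𝕜 ↦ Ring.inverse (1 - z • a) ^ 2)
      (fun n ↦ ContinuousMultilinearMap.mkPiRing 𝕜 (Fin n) ((n + 1) • a ^ n)) 0 ‖a‖₊⁻¹ where
  r_le := by
    refine le_of_forall_nnreal_lt fun r hr ↦
      FormalMultilinearSeries.le_radius_of_summable_norm _ ?_
    have hρ : ‖‖a‖ * r‖ < 1 := by
      have : (r : ℝ≥0∞) * ‖a‖₊ < 1 := mul_lt_of_lt_div (by simpa using hr)
      rw [Real.norm_of_nonneg (by positivity), mul_comm]
      exact_mod_cast this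
    refine .of_norm_bounded_eventually_nat
      (hasSum_choose_mul_geometric_of_norm_lt_one 1 hρ).summable ?_
    filter_upwards [eventually_gt_atTop 0] with n hn
    rw [norm_mul, norm_norm, norm_mkPiRing, norm_pow, NNReal.norm_eq, Nat.choose_one_right,
      mul_pow, ← mul_assoc]
    gcongr
    exact norm_nsmul_le.trans (by push_cast; gcongr; exact norm_pow_le' a hn)
  r_pos := ENNReal.inv_pos.mpr coe_ne_top
  hasSum := fun {y} hy ↦ by
    have norm_lt : ‖y • a‖ < 1 := by
      have : (‖y‖₊ : ℝ≥0∞) * ‖a‖₊ < 1 :=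
        mul_lt_of_lt_div (by simpa [mem_eball, edist_zero_right, enorm_eq_nnnorm] using hy)
      rw [norm_smul]
      exact_mod_cast this
    simpa [smul_pow, nsmul_eq_mul] using hasSum_choose_mul_geometric_of_norm_lt_one' 1 norm_lt

end PowerSeries

theorem circleAverage_poissonKernel {c w : ℂ} {R : ℝ} (hw : w ∈ ball c R) :
    circleAverage (poissonKernel c w) c R = 1 := by
  have h := (diffContOnCl_const (c := (1 : ℂ))).circleAverage_poissonKernel_smul hw
  -- a non-integrable function would have average `0`, not `1`
  have hint : CircleIntegrable (poissonKernel c w • fun _ ↦ (1 : ℂ)) c R := by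
    by_contra hni
    rw [circleAverage.integral_undef hni] at h
    exact zero_ne_one h
  simpa [h, Function.comp_def] using Complex.reCLM.circleAverage_comp_comm hint

theorem circleAverage_inv_norm_sub_one_sq {s : ℝ} (hs : |s| < 1) :
    circleAverage (fun z ↦ (‖z - 1‖ ^ 2)⁻¹) 0 s = (1 - s ^ 2)⁻¹ := by
  have hs2 : 1 - s ^ 2 ≠ 0 := by nlinarith [abs_nonneg s, sq_abs s]
  -- after `z ↦ s z⁻¹`, on the unit circle `|s z⁻¹ - 1| = |z - s|`: a multiple of the Poisson kernel
  rw [circleAverage_eq_circleAverage_zero_one, ← circleAverage_zero_one_congr_inv]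
  refine (circleAverage_congr_sphere
    (f₂ := fun z ↦ (1 - s ^ 2)⁻¹ • poissonKernel 0 s z) fun z hz ↦ ?_).trans ?_
  · rw [abs_one, mem_sphere_zero_iff_norm] at hz
    have hz0 : z ≠ 0 := by rintro rfl; simp at hz
    have hzs : ‖(s : ℂ) * z⁻¹ + 0 - 1‖ = ‖z - s‖ := by
      rw [add_zero, ← norm_neg, neg_sub, ← one_mul ‖_‖, ← hz, ← norm_mul, mul_sub, mul_one,
        mul_left_comm, mul_inv_cancel₀ hz0, mul_one]
    simp only [poissonKernel, hzs, sub_zero, hz, Complex.norm_real, Real.norm_eq_abs, sq_abs,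
      smul_eq_mul]
    field_simp
  · rw [circleAverage_fun_smul, circleAverage_poissonKernel (by simpa using hs), smul_eq_mul,
      mul_one]

section Ritt

variable {A : Type*} [NormedRing A] [NormedAlgebra ℂ A]

theorem norm_inverse_one_sub_smul_le {a : A} {C : ℝ}
    (hR : ∀ z : ℂ, 1 < ‖z‖ → ‖resolvent a z‖ ≤ C / ‖z - 1‖) {u : ℂ} (hu0 : u ≠ 0)
    (hu1 : ‖u‖ < 1) : ‖Ring.inverse (1 - u • a)‖ ≤ C / ‖1 - u‖ := by
  have hinv : Ring.inverse (1 - u • a) = u⁻¹ • resolvent a u⁻¹ := by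
    simpa [resolvent, Units.smul_def] using
      (spectrum.units_smul_resolvent_self (r := Units.mk0 u⁻¹ (inv_ne_zero hu0)) (a := a)).symm
  have hnorm : 1 < ‖u⁻¹‖ := by rw [norm_inv]; exact one_lt_inv_iff₀.2 ⟨norm_pos_iff.2 hu0, hu1⟩
  calc ‖Ring.inverse (1 - u • a)‖ = ‖u‖⁻¹ * ‖resolvent a u⁻¹‖ := by
        rw [hinv, norm_smul, norm_inv]
    _ ≤ ‖u‖⁻¹ * (C / ‖u⁻¹ - 1‖) := by gcongr; exact hR _ hnorm
    _ = C / ‖1 - u‖ := by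
        rw [inv_mul_eq_div, div_div, ← norm_mul, sub_mul, inv_mul_cancel₀ hu0, one_mul]

variable [CompleteSpace A]

theorem cauchyPowerSeries_inverse_one_sub_smul_sq {a : A} {s : ℝ≥0}
    (hs : (s : ℝ≥0∞) < (spectralRadius ℂ a)⁻¹) (hs0 : 0 < s) :
    cauchyPowerSeries (fun z : ℂ ↦ Ring.inverse (1 - z • a) ^ 2) 0 s =
      fun n ↦ ContinuousMultilinearMap.mkPiRing ℂ (Fin n) ((n + 1) • a ^ n) :=
  (((spectrum.differentiableOn_inverse_one_sub_smul hs).pow 2).hasFPowerSeriesOnBall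
    hs0).hasFPowerSeriesAt.eq_formalMultilinearSeries
      (hasFPowerSeriesOnBall_inverse_one_sub_smul_sq a).hasFPowerSeriesAt

theorem succ_mul_norm_pow_le_of_resolvent_bound {a : A} (ha : spectralRadius ℂ a ≤ 1) {C : ℝ}
    (hR : ∀ z : ℂ, 1 < ‖z‖ → ‖resolvent a z‖ ≤ C / ‖z - 1‖) {s : ℝ} (hs0 : 0 < s) (hs1 : s < 1)
    (n : ℕ) : (n + 1) * ‖a ^ n‖ ≤ C ^ 2 * (1 - s ^ 2)⁻¹ * s⁻¹ ^ n := by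
  have hPoisson := circleAverage_inv_norm_sub_one_sq (abs_lt.2 ⟨by linarith, hs1⟩)
  lift s to ℝ≥0 using hs0.le
  set g : ℂ → A := fun z ↦ Ring.inverse (1 - z • a) ^ 2
  have hs : (s : ℝ≥0∞) < (spectralRadius ℂ a)⁻¹ :=
    lt_of_lt_of_le (by exact_mod_cast hs1) (ENNReal.one_le_inv.2 ha)
  have hg : ContinuousOn g (sphere 0 s) :=
    ((spectrum.differentiableOn_inverse_one_sub_smul hs).pow 2).continuousOn.mono
      sphere_subset_closedBall
  have hbound : ∀ z ∈ sphere (0 : ℂ) |(s : ℝ)|, ‖g z‖ ≤ C ^ 2 * (‖z - 1‖ ^ 2)⁻¹ := by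
    intro z hz
    rw [NNReal.abs_eq, mem_sphere_zero_iff_norm] at hz
    have hz0 : z ≠ 0 := norm_ne_zero_iff.1 (hz ▸ hs0.ne')
    calc ‖g z‖ ≤ ‖Ring.inverse (1 - z • a)‖ ^ 2 := norm_pow_le' _ two_pos
      _ ≤ (C / ‖1 - z‖) ^ 2 := by
          gcongr
          exact norm_inverse_one_sub_smul_le hR hz0 (hz ▸ hs1)
      _ = C ^ 2 * (‖z - 1‖ ^ 2)⁻¹ := by rw [norm_sub_rev, div_pow, div_eq_mul_inv]
  have hint : CircleIntegrable (fun z ↦ C ^ 2 * (‖z - 1‖ ^ 2)⁻¹) 0 s := by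
    refine ContinuousOn.circleIntegrable s.2
      (continuousOn_const.mul (ContinuousOn.inv₀ (by fun_prop) fun z hz h ↦ ?_))
    rw [mem_sphere_zero_iff_norm] at hz
    rw [sq_eq_zero_iff, norm_eq_zero, sub_eq_zero] at h
    rw [h, norm_one] at hz
    exact hs1.ne' hz
  calc (n + 1) * ‖a ^ n‖ = ‖cauchyPowerSeries g 0 s n‖ := by
        rw [cauchyPowerSeries_inverse_one_sub_smul_sq hs hs0,
          ContinuousMultilinearMap.norm_mkPiRing, RCLike.norm_nsmul ℂ, nsmul_eq_mul]
        push_cast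
        ring
    _ ≤ circleAverage (‖g ·‖) 0 s * |(s : ℝ)|⁻¹ ^ n := norm_cauchyPowerSeries_le g 0 s n
    _ ≤ circleAverage (fun z ↦ C ^ 2 * (‖z - 1‖ ^ 2)⁻¹) 0 s * (s : ℝ)⁻¹ ^ n := by
        rw [NNReal.abs_eq]
        exact mul_le_mul_of_nonneg_right
          (circleAverage_mono (hg.norm.circleIntegrable s.2) hint hbound) (by positivity)
    _ = C ^ 2 * (1 - (s : ℝ) ^ 2)⁻¹ * (s : ℝ)⁻¹ ^ n := by
        simp_rw [← smul_eq_mul (a := C ^ 2), circleAverage_fun_smul, hPoisson]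

theorem norm_pow_le_of_resolvent_bound {a : A} (ha : spectralRadius ℂ a ≤ 1) {C : ℝ}
    (hR : ∀ z : ℂ, 1 < ‖z‖ → ‖resolvent a z‖ ≤ C / ‖z - 1‖) (n : ℕ) :
    ‖a ^ n‖ ≤ exp 1 * C ^ 2 := by
  have hm : (0 : ℝ) < n + 1 := by positivity
  set t : ℝ := 1 + ((n : ℝ) + 1)⁻¹
  have ht : 1 < t := lt_add_of_pos_right 1 (inv_pos.2 hm)
  have hradius : (1 - t⁻¹ ^ 2)⁻¹ * t⁻¹⁻¹ ^ n ≤ (n + 1) * exp 1 := by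
    have h1 : (1 - t⁻¹ ^ 2)⁻¹ ≤ (n + 1) * t := by
      have : 0 < 1 - t⁻¹ ^ 2 := by
        nlinarith [inv_lt_one_of_one_lt₀ ht, inv_pos.2 (zero_lt_one.trans ht)]
      rw [inv_le_iff_one_le_mul₀ this]
      simp only [t]
      field_simp
      nlinarith
    calc (1 - t⁻¹ ^ 2)⁻¹ * t⁻¹⁻¹ ^ n ≤ (n + 1) * t * t ^ n := by rw [inv_inv]; gcongr
      _ = (n + 1) * (1 + ((n + 1 : ℕ) : ℝ)⁻¹) ^ (n + 1) := by push_cast; ring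
      _ ≤ (n + 1) * exp 1 := by gcongr; exact one_add_inv_pow_le_exp
  refine le_of_mul_le_mul_left ?_ hm
  calc (n + 1) * ‖a ^ n‖ ≤ C ^ 2 * ((1 - t⁻¹ ^ 2)⁻¹ * t⁻¹⁻¹ ^ n) := by
        rw [← mul_assoc]
        exact succ_mul_norm_pow_le_of_resolvent_bound ha hR (inv_pos.2 (by linarith))
          (inv_lt_one_of_one_lt₀ ht) n
    _ ≤ C ^ 2 * ((n + 1) * exp 1) := by gcongr
    _ = (n + 1) * (exp 1 * C ^ 2) := by ring

end Ritt

theorem stmt1_general {X : Type*} [NormedAddCommGroup X] [NormedSpace ℂ X] [CompleteSpace X]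
    (T : X →L[ℂ] X) (hspr : spectralRadius ℂ T ≤ 1) (C : ℝ)
    (hritt : ∀ z : ℂ, 1 < ‖z‖ → z ∈ resolventSet ℂ T ∧
      ‖Ring.inverse (algebraMap ℂ (X →L[ℂ] X) z - T)‖ ≤ C / ‖z - 1‖) :
    ∃ K : ℝ, ∀ n : ℕ, ‖T ^ n‖ ≤ K :=
  ⟨exp 1 * C ^ 2, norm_pow_le_of_resolvent_bound hspr fun z hz ↦ (hritt z hz).2⟩

/-- A Ritt operator is power-bounded. -/
theorem stmt1 {X : Type*} [NormedAddCommGroup X] [NormedSpace ℂ X] [CompleteSpace X]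
    (T : X →L[ℂ] X) (hspr : spectralRadius ℂ T ≤ 1) (C : ℝ) (hC : 0 < C)
    (hritt : ∀ z : ℂ, 1 < ‖z‖ → z ∈ resolventSet ℂ T ∧
      ‖Ring.inverse (algebraMap ℂ (X →L[ℂ] X) z - T)‖ ≤ C / ‖z - 1‖) :
    ∃ K : ℝ, ∀ n : ℕ, ‖T ^ n‖ ≤ K :=
  stmt1_general T hspr C hritt
end

section
/- Let T be a bounded operator on a complex Banach space such that sup_{n≥0} ‖T^n‖ < ∞ and sup_{n≥1} n‖T^n(I−T)‖ < ∞. Then T satisfies the Ritt resolvent condition: there exists C > 0 such that ‖(zI − T)⁻¹‖ ≤ C/|z − 1| for all |z| > 1. -/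
open Filter Topology

set_option maxHeartbeats 2000000 in
theorem ritt_aux {A : Type*} [NormedRing A] [NormedAlgebra ℂ A] [CompleteSpace A]
    (T : A) (K M : ℝ) (hK : ∀ n : ℕ, ‖T ^ n‖ ≤ K)
    (hM : ∀ n : ℕ, 1 ≤ n → (n : ℝ) * ‖T ^ n * (1 - T)‖ ≤ M) :
    ∃ C : ℝ, 0 < C ∧ ∀ z : ℂ, 1 < ‖z‖ → z ∈ resolventSet ℂ T ∧
      ‖Ring.inverse (algebraMap ℂ A z - T)‖ ≤ C / ‖z - 1‖ := by
  have hK0 : 0 ≤ K := le_trans (norm_nonneg _) (hK 0)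
  have hM0 : 0 ≤ M := le_trans (by positivity : (0:ℝ) ≤ (1:ℝ) * ‖T ^ 1 * (1 - T)‖) (by simpa using hM 1 le_rfl)
  refine ⟨2 + 11*K + M + 18*M^2, by nlinarith, ?_⟩
  intro z hz
  have hz0 : z ≠ 0 := by
    intro h; rw [h] at hz; simp at hz; linarith
  have hz1 : z ≠ 1 := by
    intro h; rw [h] at hz; simp at hz
  have ht : 0 < ‖z - 1‖ := by
    rw [norm_pos_iff]; exact sub_ne_zero.2 hz1
  set r : ℝ := ‖z⁻¹‖ with hrdef
  have hr0 : 0 ≤ r := norm_nonneg _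
  have hr1 : r < 1 := by
    rw [hrdef, norm_inv]
    exact inv_lt_one_of_one_lt₀ hz
  -- summability helpers
  have hnorm : ∀ (W : A) (n : ℕ), ‖z⁻¹ ^ (n+1) • (W * T ^ n)‖ ≤ (‖W‖ * K) * r ^ n := by
    intro W n
    calc ‖z⁻¹ ^ (n+1) • (W * T ^ n)‖ = r ^ (n+1) * ‖W * T ^ n‖ := by
          rw [norm_smul, norm_pow]
    _ ≤ r ^ (n+1) * (‖W‖ * K) := by
        refine mul_le_mul_of_nonneg_left ?_ (by positivity)
        exact le_trans (norm_mul_le _ _) (mul_le_mul_of_nonneg_left (hK n) (norm_nonneg W))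
    _ = (‖W‖ * K) * r ^ (n+1) := mul_comm _ _
    _ ≤ (‖W‖ * K) * r ^ n := by
        refine mul_le_mul_of_nonneg_left ?_ (by positivity)
        exact pow_le_pow_of_le_one hr0 hr1.le (Nat.le_succ n)
  have hsumn : ∀ W : A, Summable (fun n : ℕ => ‖z⁻¹ ^ (n+1) • (W * T ^ n)‖) := by
    intro W
    refine Summable.of_nonneg_of_le (fun n => norm_nonneg _) (hnorm W) ?_
    exact (summable_geometric_of_lt_one hr0 hr1).mul_left _
  have hsum : ∀ W : A, Summable (fun n : ℕ => z⁻¹ ^ (n+1) • (W * T ^ n)) :=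
    fun W => (hsumn W).of_norm
  set f : ℕ → A := fun n => z⁻¹ ^ (n+1) • T ^ n with hfdef
  have hsf : Summable f := by
    simpa only [one_mul] using hsum 1
  set S : A := ∑' n, f n with hSdef
  have hmulS : ∀ W : A, W * S = ∑' n, z⁻¹ ^ (n+1) • (W * T ^ n) := by
    intro W
    rw [hSdef, ← Summable.tsum_mul_left W hsf]
    congr 1; funext n
    rw [hfdef, mul_smul_comm]
  -- telescoping
  set g : ℕ → A := fun n => z⁻¹ ^ n • T ^ n with hgdef
  have hgnorm : ∀ n, ‖g n‖ ≤ K * r ^ n := by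
    intro n
    rw [hgdef]
    calc ‖z⁻¹ ^ n • T ^ n‖ = r ^ n * ‖T ^ n‖ := by rw [norm_smul, norm_pow]
    _ ≤ r ^ n * K := by
        apply mul_le_mul_of_nonneg_left (hK n) (by positivity)
    _ = K * r ^ n := mul_comm _ _
  have hsg : Summable g :=
    Summable.of_norm_bounded ((summable_geometric_of_lt_one hr0 hr1).mul_left K) hgnorm
  have hsg1 : Summable (fun n => g (n+1)) := (summable_nat_add_iff 1).2 hsg
  have hg0 : g 0 = 1 := by simp [hgdef]
  have htel : ∑' n, (g n - g (n+1)) = 1 := by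
    rw [Summable.tsum_sub hsg hsg1, Summable.tsum_eq_zero_add hsg]
    rw [hg0]; abel
  have hzz : ∀ n : ℕ, z * z⁻¹ ^ (n+1) = z⁻¹ ^ n := by
    intro n
    rw [pow_succ', ← mul_assoc, mul_inv_cancel₀ hz0, one_mul]
  have hfg : ∀ n, (z • (1:A) - T) * f n = g n - g (n+1) := by
    intro n
    rw [sub_mul, smul_mul_assoc, one_mul, hfdef, hgdef]
    simp only
    rw [smul_smul, hzz, mul_smul_comm, ← pow_succ']
  have hfg' : ∀ n, f n * (z • (1:A) - T) = g n - g (n+1) := by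
    intro n
    rw [mul_sub, mul_smul_comm, mul_one, hfdef, hgdef]
    simp only
    rw [smul_smul, hzz, smul_mul_assoc, ← pow_succ]
  have h1 : (z • (1:A) - T) * S = 1 := by
    rw [hSdef, ← Summable.tsum_mul_left _ hsf, tsum_congr hfg, htel]
  have h2 : S * (z • (1:A) - T) = 1 := by
    rw [hSdef, ← Summable.tsum_mul_right _ hsf, tsum_congr hfg', htel]
  set u : Aˣ := ⟨z • (1:A) - T, S, h1, h2⟩ with hudef
  have halg : algebraMap ℂ A z - T = z • (1:A) - T := by
    rw [Algebra.algebraMap_eq_smul_one]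
  have hres : z ∈ resolventSet ℂ T := by
    rw [spectrum.mem_resolventSet_iff, halg]
    exact ⟨u, rfl⟩
  have hinv : Ring.inverse (algebraMap ℂ A z - T) = S := by
    rw [halg]
    exact Ring.inverse_unit u
  refine ⟨hres, ?_⟩
  rw [hinv]
  -- key identity
  have hkey : (z - 1) • S = 1 - (1 - T) * S := by
    have hsplit : z • (1:A) - T = (z-1) • (1:A) + (1 - T) := by
      rw [sub_smul, one_smul]; abel
    have := h1
    rw [hsplit, add_mul, smul_mul_assoc, one_mul] at this
    linear_combination (norm := abel) this
  have hsfn : Summable (fun n => ‖f n‖) := by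
    simpa only [one_mul] using hsumn 1
  have hfnorm : ∀ n : ℕ, ‖f n‖ ≤ (K * r) * r ^ n := by
    intro n
    rw [hfdef]
    simp only
    rw [norm_smul, norm_pow]
    calc r ^ (n+1) * ‖T ^ n‖ ≤ r ^ (n+1) * K :=
          mul_le_mul_of_nonneg_left (hK n) (by positivity)
    _ = (K * r) * r ^ n := by ring
  by_cases hz2 : 2 ≤ ‖z‖
  · -- easy region
    have hSnorm : ‖S‖ ≤ (K * r) * (1 - r)⁻¹ := by
      refine le_trans (norm_tsum_le_tsum_norm hsfn) ?_
      calc ∑' n, ‖f n‖ ≤ ∑' n : ℕ, (K * r) * r ^ n := by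
            refine Summable.tsum_le_tsum hfnorm hsfn ?_
            exact (summable_geometric_of_lt_one hr0 hr1).mul_left _
      _ = (K * r) * (1 - r)⁻¹ := by rw [tsum_mul_left, tsum_geometric_of_lt_one hr0 hr1]
    have hreq : r = ‖z‖⁻¹ := by rw [hrdef, norm_inv]
    have hzpos : (0:ℝ) < ‖z‖ := by linarith
    have hrz : r * ‖z‖ = 1 := by rw [hreq]; exact inv_mul_cancel₀ hzpos.ne'
    have h1r : (0:ℝ) < 1 - r := by linarith
    have hz3 : ‖z - 1‖ ≤ ‖z‖ + 1 := by
      calc ‖z - 1‖ ≤ ‖z‖ + ‖(1:ℂ)‖ := norm_sub_le z 1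
      _ = ‖z‖ + 1 := by rw [norm_one]
    have hSnorm' : ‖S‖ ≤ (K * r) / (1 - r) := by rw [div_eq_mul_inv]; exact hSnorm
    refine le_trans hSnorm' ?_
    rw [div_le_div_iff₀ h1r ht]
    have e1 : K * ‖z - 1‖ ≤ 3 * K * (‖z‖ - 1) := by
      nlinarith [mul_le_mul_of_nonneg_left hz3 hK0,
        mul_nonneg hK0 (show (0:ℝ) ≤ ‖z‖ - 2 by linarith)]
    have e2 : (‖z‖ - 1) * r = 1 - r := by linear_combination hrz
    nlinarith [mul_le_mul_of_nonneg_right e1 hr0, e2,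
      mul_nonneg hM0 h1r.le, mul_nonneg (mul_nonneg hM0 hM0) h1r.le, mul_nonneg hK0 h1r.le]
  · push_neg at hz2
    have hz3 : ‖z - 1‖ ≤ ‖z‖ + 1 := by
      calc ‖z - 1‖ ≤ ‖z‖ + ‖(1:ℂ)‖ := norm_sub_le z 1
      _ = ‖z‖ + 1 := by rw [norm_one]
    have ht3 : ‖z - 1‖ < 3 := by linarith
    set N : ℕ := ⌊1/‖z - 1‖⌋₊ + 2 with hNdef
    have hN2 : 2 ≤ N := Nat.le_add_left 2 _
    have hNpos : (0:ℝ) < (N:ℝ) := by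
      have : 0 < N := by omega
      exact_mod_cast this
    have hNge : 1/‖z - 1‖ ≤ (N:ℝ) := by
      have h := Nat.sub_one_lt_floor (1/‖z - 1‖)
      push_cast [hNdef]
      linarith
    have hNt1 : 1 ≤ (N:ℝ) * ‖z - 1‖ := by
      have h := mul_le_mul_of_nonneg_right hNge ht.le
      rwa [one_div, inv_mul_cancel₀ ht.ne'] at h
    have hNt7 : (N:ℝ) * ‖z - 1‖ ≤ 7 := by
      have hfl : (⌊1/‖z - 1‖⌋₊:ℝ) ≤ 1/‖z - 1‖ := Nat.floor_le (by positivity)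
      have h5 : (1/‖z - 1‖) * ‖z - 1‖ = 1 := one_div_mul_cancel ht.ne'
      push_cast [hNdef]
      nlinarith
    have hfK : ∀ n : ℕ, ‖f n‖ ≤ K := by
      intro n
      rw [hfdef]
      simp only
      rw [norm_smul, norm_pow]
      calc r ^ (n+1) * ‖T ^ n‖ ≤ 1 * K :=
            mul_le_mul (pow_le_one₀ hr0 hr1.le) (hK n) (norm_nonneg _) zero_le_one
      _ = K := one_mul K
    have hGnorm : ‖∑ n ∈ Finset.range N, f n‖ ≤ (N:ℝ) * K := by
      refine le_trans (norm_sum_le _ _) ?_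
      calc ∑ n ∈ Finset.range N, ‖f n‖ ≤ ∑ n ∈ Finset.range N, K :=
            Finset.sum_le_sum (fun n _ => hfK n)
      _ = (N:ℝ) * K := by rw [Finset.sum_const, Finset.card_range, nsmul_eq_mul]
    have htaileval : ∑' i, f (i+N) = z⁻¹^N • (T^N * S) := by
      have he : ∀ i : ℕ, f (i+N) = z⁻¹^N • (z⁻¹^(i+1) • (T^N * T^i)) := by
        intro i
        rw [hfdef]
        simp only
        rw [smul_smul, ← pow_add, ← pow_add]
        rw [show N + (i+1) = i + N + 1 by omega, show N + i = i + N by omega]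
      rw [tsum_congr he, Summable.tsum_const_smul _ (hsum (T^N)), ← hmulS]
    have htailid : S = (∑ n ∈ Finset.range N, f n) + z⁻¹^N • (T^N * S) := by
      conv_lhs => rw [hSdef]
      rw [← Summable.sum_add_tsum_nat_add N hsf, htaileval]
    have hgeo : (z • (1:A) - T) * (∑ n ∈ Finset.range N, f n) = 1 - z⁻¹^N • T^N := by
      rw [Finset.mul_sum, Finset.sum_congr rfl (fun n _ => hfg n), Finset.sum_range_sub' g N, hg0]
    have hcomm : ∀ n : ℕ, (1 - T) * T^n = T^n * (1 - T) := by
      intro n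
      rw [sub_mul, mul_sub, one_mul, mul_one, ← pow_succ, ← pow_succ']
    have hMdiv : ∀ a : ℕ, 1 ≤ a → ‖T^a * (1-T)‖ ≤ M / (a:ℝ) := by
      intro a ha
      have hapos : (0:ℝ) < (a:ℝ) := by exact_mod_cast Nat.pos_of_ne_zero (by omega)
      rw [le_div_iff₀ hapos, mul_comm]
      exact hM a ha
    have hsec : ∀ m : ℕ, 2 ≤ m → ‖T^m * (1-T) * (1-T)‖ ≤ 9*M^2/(m:ℝ)^2 := by
      intro m hm
      obtain ⟨a, b, hab, ha1, hb1, h3a, h3b⟩ :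
          ∃ a b : ℕ, a + b = m ∧ 1 ≤ a ∧ 1 ≤ b ∧ m ≤ 3*a ∧ m ≤ 3*b :=
        ⟨m/2, m - m/2, by omega, by omega, by omega, by omega, by omega⟩
      have hapos : (0:ℝ) < (a:ℝ) := by exact_mod_cast Nat.pos_of_ne_zero (by omega)
      have hbpos : (0:ℝ) < (b:ℝ) := by exact_mod_cast Nat.pos_of_ne_zero (by omega)
      have hmpos : (0:ℝ) < (m:ℝ) := by exact_mod_cast Nat.pos_of_ne_zero (by omega)
      have hid : T^m * (1-T) * (1-T) = (T^a * (1-T)) * (T^b * (1-T)) := by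
        rw [← hab, pow_add]
        rw [mul_assoc (T^a) (T^b) (1-T), ← hcomm b, ← mul_assoc (T^a) (1-T) (T^b),
          mul_assoc (T^a * (1-T)) (T^b) (1-T), hcomm b]
      calc ‖T^m * (1-T) * (1-T)‖ = ‖(T^a * (1-T)) * (T^b * (1-T))‖ := by rw [hid]
      _ ≤ ‖T^a * (1-T)‖ * ‖T^b * (1-T)‖ := norm_mul_le _ _
      _ ≤ (M/(a:ℝ)) * (M/(b:ℝ)) :=
          mul_le_mul (hMdiv a ha1) (hMdiv b hb1) (norm_nonneg _) (div_nonneg hM0 hapos.le)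
      _ ≤ 9*M^2/(m:ℝ)^2 := by
          have hcast : (m:ℝ)*(m:ℝ) ≤ (3*(a:ℝ))*(3*(b:ℝ)) := by
            exact_mod_cast Nat.mul_le_mul h3a h3b
          rw [div_mul_div_comm, div_le_div_iff₀ (by positivity) (by positivity)]
          nlinarith [mul_le_mul_of_nonneg_left hcast (sq_nonneg M)]
    have hW1n : ‖(1-T) * T^N‖ ≤ M / (N:ℝ) := by
      rw [hcomm N]
      exact hMdiv N (by omega)
    have hW2k : ∀ k : ℕ, ((1-T) * T^N * (1-T)) * T^k = T^(N+k) * (1-T) * (1-T) := by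
      intro k
      rw [mul_assoc ((1-T)*T^N) (1-T) (T^k), hcomm k, ← mul_assoc ((1-T)*T^N) (T^k) (1-T),
        mul_assoc (1-T) (T^N) (T^k), ← pow_add, hcomm (N+k)]
    have hW2S : ‖((1-T) * T^N * (1-T)) * S‖ ≤ 18*M^2/(N:ℝ) := by
      rw [hmulS ((1-T) * T^N * (1-T))]
      refine le_trans (norm_tsum_le_tsum_norm (hsumn _)) ?_
      refine Summable.tsum_le_of_sum_range_le (hsumn _) ?_
      intro n
      have hterm : ∀ i : ℕ, ‖z⁻¹^(i+1) • (((1-T) * T^N * (1-T)) * T^i)‖ ≤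
          18*M^2/((N+i:ℕ):ℝ) - 18*M^2/((N+(i+1):ℕ):ℝ) := by
        intro i
        have h1 : ‖z⁻¹^(i+1) • (((1-T) * T^N * (1-T)) * T^i)‖ ≤ ‖((1-T) * T^N * (1-T)) * T^i‖ := by
          rw [norm_smul, norm_pow]
          calc r^(i+1) * ‖((1-T) * T^N * (1-T)) * T^i‖ ≤ 1 * ‖((1-T) * T^N * (1-T)) * T^i‖ :=
                mul_le_mul_of_nonneg_right (pow_le_one₀ hr0 hr1.le) (norm_nonneg _)
          _ = _ := one_mul _
        have h2 : ‖((1-T) * T^N * (1-T)) * T^i‖ ≤ 9*M^2/((N+i:ℕ):ℝ)^2 := by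
          rw [hW2k i]
          exact hsec (N+i) (by omega)
        refine le_trans (le_trans h1 h2) ?_
        have hm1 : (1:ℝ) ≤ ((N+i:ℕ):ℝ) := by
          have : (1:ℕ) ≤ N+i := by omega
          exact_mod_cast this
        have hc : ((N+(i+1):ℕ):ℝ) = ((N+i:ℕ):ℝ) + 1 := by push_cast; ring
        rw [hc]
        have hm0 : (0:ℝ) < ((N+i:ℕ):ℝ) := by linarith
        rw [div_sub_div _ _ hm0.ne' (by linarith : ((N+i:ℕ):ℝ) + 1 ≠ 0),
          div_le_div_iff₀ (by positivity) (by positivity)]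
        nlinarith [mul_nonneg (mul_nonneg (sq_nonneg M) hm0.le) (by linarith : (0:ℝ) ≤ ((N+i:ℕ):ℝ) - 1)]
      calc ∑ i ∈ Finset.range n, ‖z⁻¹^(i+1) • (((1-T) * T^N * (1-T)) * T^i)‖
          ≤ ∑ i ∈ Finset.range n, (18*M^2/((N+i:ℕ):ℝ) - 18*M^2/((N+(i+1):ℕ):ℝ)) :=
            Finset.sum_le_sum (fun i _ => hterm i)
      _ = 18*M^2/((N+0:ℕ):ℝ) - 18*M^2/((N+n:ℕ):ℝ) :=
            Finset.sum_range_sub' (fun i => 18*M^2/((N+i:ℕ):ℝ)) n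
      _ ≤ 18*M^2/(N:ℝ) := by
            have h7 : (0:ℝ) ≤ 18*M^2/((N+n:ℕ):ℝ) := by positivity
            have h8 : ((N+0:ℕ):ℝ) = (N:ℝ) := by push_cast; ring
            rw [h8]
            linarith
    have hone : ‖(1:A)‖ ≤ K := by simpa using hK 0
    have hsplit2 : (1:A) - T = (1-z) • (1:A) + (z • (1:A) - T) := by
      rw [sub_smul, one_smul]
      abel
    have hheadeq : (1-T) * (∑ n ∈ Finset.range N, f n) =
        (1-z) • (∑ n ∈ Finset.range N, f n) + (1 - z⁻¹^N • T^N) := by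
      conv_lhs => rw [hsplit2]
      rw [add_mul, smul_mul_assoc, one_mul, hgeo]
    have hhead : ‖(1-T) * (∑ n ∈ Finset.range N, f n)‖ ≤ 7*K + 2*K := by
      rw [hheadeq]
      refine le_trans (norm_add_le _ _) ?_
      have e1 : ‖(1-z) • (∑ n ∈ Finset.range N, f n)‖ ≤ 7*K := by
        rw [norm_smul, norm_sub_rev]
        calc ‖z - 1‖ * ‖∑ n ∈ Finset.range N, f n‖ ≤ ‖z - 1‖ * ((N:ℝ)*K) :=
              mul_le_mul_of_nonneg_left hGnorm ht.le
        _ ≤ 7*K := by nlinarith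
      have e3 : ‖z⁻¹^N • T^N‖ ≤ K := by
        rw [norm_smul, norm_pow]
        calc r^N * ‖T^N‖ ≤ 1*K :=
              mul_le_mul (pow_le_one₀ hr0 hr1.le) (hK N) (norm_nonneg _) zero_le_one
        _ = K := one_mul _
      have e2 : ‖(1:A) - z⁻¹^N • T^N‖ ≤ 2*K := by
        refine le_trans (norm_sub_le _ _) ?_
        linarith
      linarith
    have hz1' : z - 1 ≠ 0 := sub_ne_zero.2 hz1
    have hSexpr : S = (z-1)⁻¹ • ((1:A) - (1-T)*S) := by
      rw [← hkey, inv_smul_smul₀ hz1']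
    have htailexpr : (1-T) * (T^N * S) =
        (z-1)⁻¹ • ((1-T) * T^N - ((1-T) * T^N * (1-T)) * S) := by
      calc (1-T) * (T^N * S) = ((1-T) * T^N) * S := by rw [mul_assoc]
      _ = ((1-T) * T^N) * ((z-1)⁻¹ • ((1:A) - (1-T)*S)) := by rw [← hSexpr]
      _ = (z-1)⁻¹ • (((1-T) * T^N) * ((1:A) - (1-T)*S)) := mul_smul_comm _ _ _
      _ = (z-1)⁻¹ • ((1-T) * T^N - ((1-T) * T^N * (1-T)) * S) := by
          rw [mul_sub, mul_one, ← mul_assoc]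
    have htailn : ‖(1-T) * (z⁻¹^N • (T^N * S))‖ ≤ M + 18*M^2 := by
      have hWsub : ‖(1-T) * T^N - ((1-T) * T^N * (1-T)) * S‖ ≤ (M + 18*M^2)/(N:ℝ) := by
        refine le_trans (norm_sub_le _ _) ?_
        rw [add_div]
        exact add_le_add hW1n hW2S
      calc ‖(1-T) * (z⁻¹^N • (T^N * S))‖
          = ‖z⁻¹‖^N * (‖(z-1)⁻¹‖ * ‖(1-T) * T^N - ((1-T) * T^N * (1-T)) * S‖) := by
            rw [mul_smul_comm, htailexpr, norm_smul, norm_smul, norm_pow]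
      _ ≤ 1 * (‖z - 1‖⁻¹ * ((M + 18*M^2)/(N:ℝ))) := by
            refine mul_le_mul (pow_le_one₀ hr0 hr1.le) ?_ (by positivity) zero_le_one
            rw [norm_inv]
            refine mul_le_mul_of_nonneg_left hWsub ?_
            positivity
      _ ≤ M + 18*M^2 := by
            rw [one_mul]
            have hNt0 : (0:ℝ) < (N:ℝ) * ‖z - 1‖ := mul_pos hNpos ht
            have h6 : ‖z - 1‖⁻¹ * ((M + 18*M^2)/(N:ℝ)) = (M + 18*M^2) / ((N:ℝ) * ‖z - 1‖) := by
              rw [mul_comm, ← div_eq_mul_inv, div_div]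
            rw [h6, div_le_iff₀ hNt0]
            nlinarith [sq_nonneg M]
    have hTS : ‖(1-T) * S‖ ≤ 9*K + M + 18*M^2 := by
      calc ‖(1-T)*S‖ = ‖(1-T) * (∑ n ∈ Finset.range N, f n) + (1-T) * (z⁻¹^N • (T^N * S))‖ := by
            rw [← mul_add, ← htailid]
      _ ≤ ‖(1-T) * (∑ n ∈ Finset.range N, f n)‖ + ‖(1-T) * (z⁻¹^N • (T^N * S))‖ := norm_add_le _ _
      _ ≤ (7*K + 2*K) + (M + 18*M^2) := add_le_add hhead htailn
      _ = 9*K + M + 18*M^2 := by ring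
    have hfinal : ‖z - 1‖ * ‖S‖ ≤ 2 + 11*K + M + 18*M^2 := by
      have e1 : ‖(z-1) • S‖ = ‖z - 1‖ * ‖S‖ := norm_smul _ _
      have e2 : ‖(1:A) - (1-T)*S‖ ≤ K + (9*K + M + 18*M^2) :=
        le_trans (norm_sub_le _ _) (add_le_add hone hTS)
      rw [← e1, hkey]
      linarith
    rw [le_div_iff₀ ht, mul_comm]
    exact hfinal

/-- If `T` is power-bounded and `sup_{n≥1} n ‖T^n (I - T)‖ < ∞`, then `T` satisfies
the Ritt resolvent condition. -/
theorem stmt3 {X : Type*} [NormedAddCommGroup X] [NormedSpace ℂ X] [CompleteSpace X]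
    (T : X →L[ℂ] X) (hpb : ∃ K : ℝ, ∀ n : ℕ, ‖T ^ n‖ ≤ K)
    (hkt : ∃ M : ℝ, ∀ n : ℕ, 1 ≤ n → (n : ℝ) * ‖T ^ n * (1 - T)‖ ≤ M) :
    ∃ C : ℝ, 0 < C ∧ ∀ z : ℂ, 1 < ‖z‖ → z ∈ resolventSet ℂ T ∧
      ‖Ring.inverse (algebraMap ℂ (X →L[ℂ] X) z - T)‖ ≤ C / ‖z - 1‖ := by
  obtain ⟨K, hK⟩ := hpb
  obtain ⟨M, hM⟩ := hkt
  exact ritt_aux T K M hK hM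
end

section
/- Let S be a power-bounded operator on a complex Banach space and let α ∈ (0,1). Then T := αI + (1−α)S is power-bounded and satisfies ‖T^n(I − T)‖ = O(n^{−1/2}) as n → ∞, i.e. sup_{n≥1} √n · ‖T^n(I − T)‖ < ∞. -/
open Filter Topology Finset

noncomputable def bin (p : ℝ) (N k : ℕ) : ℝ := (N.choose k : ℝ) * p^k * (1-p)^(N-k)

lemma bin_nonneg {p : ℝ} (h0 : 0 ≤ p) (h1 : p ≤ 1) (N k : ℕ) : 0 ≤ bin p N k := by
  have : (0:ℝ) ≤ 1 - p := by linarith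
  unfold bin; positivity

lemma bin_sum (p : ℝ) (N : ℕ) : ∑ k ∈ range (N+1), bin p N k = 1 := by
  have h := add_pow p (1-p) N
  simp only [add_sub_cancel, one_pow] at h
  rw [h]
  exact Finset.sum_congr rfl fun k _ => by unfold bin; ring

lemma bin_variance (p : ℝ) (N : ℕ) :
    ∑ k ∈ range (N+1), bin p N k * ((N:ℝ)*p - k)^2 = N*p*(1-p) := by
  have h := bernsteinPolynomial.variance (R := ℝ) N
  have h2 := congrArg (Polynomial.eval p) h
  simp only [Polynomial.eval_finset_sum, Polynomial.eval_mul, Polynomial.eval_pow,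
    Polynomial.eval_sub, Polynomial.eval_smul, Polynomial.eval_natCast, Polynomial.eval_X,
    Polynomial.eval_one, bernsteinPolynomial, smul_eq_mul, nsmul_eq_mul] at h2
  rw [← h2]
  exact Finset.sum_congr rfl fun k _ => by unfold bin; ring

lemma bin_diff (p : ℝ) (n k : ℕ) :
    (bin p n (k+1) - bin p n k) * (((n:ℝ)+1)*p*(1-p)) =
      bin p (n+1) (k+1) * (((n:ℝ)+1)*p - (k+1)) := by
  rcases lt_trichotomy k n with hk | rfl | hk
  · obtain ⟨m, rfl⟩ : ∃ m, n = k+1+m := ⟨n-(k+1), by omega⟩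
    unfold bin
    have e1 : k+1+m - (k+1) = m := by omega
    have e2 : k+1+m - k = m+1 := by omega
    have e3 : k+1+m+1 - (k+1) = m+1 := by omega
    rw [e1, e2, e3]
    have hid : ((k+1+m:ℕ)+1 : ℝ) * ((k+1+m).choose k : ℝ) =
        (((k+1+m+1).choose (k+1) : ℝ)) * ((k:ℝ)+1) := by
      have := Nat.add_one_mul_choose_eq (k+1+m) k
      exact_mod_cast congrArg (Nat.cast : ℕ → ℝ) this
    have hcc : ((k+1+m+1).choose (k+1) : ℝ) =
        ((k+1+m).choose k : ℝ) + ((k+1+m).choose (k+1) : ℝ) := by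
      rw [Nat.choose_succ_succ]; push_cast; ring
    push_cast
    push_cast at hid hcc
    linear_combination (-(p^(k+1)*(1-p)^(m+1))) * hid +
      (-((k:ℝ)+1+(m:ℝ)+1)*p*p^(k+1)*(1-p)^(m+1)) * hcc
  · unfold bin
    simp [Nat.sub_self]
    ring
  · unfold bin
    rw [Nat.choose_eq_zero_of_lt (by omega), Nat.choose_eq_zero_of_lt (by omega),
      Nat.choose_eq_zero_of_lt (by omega)]
    simp

lemma bin_diff0 (p : ℝ) (n : ℕ) :
    bin p n 0 * (((n:ℝ)+1)*p*(1-p)) = bin p (n+1) 0 * (((n:ℝ)+1)*p - 0) := by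
  unfold bin
  simp [pow_succ]
  ring

/-- Foguel–Weiss / Nevanlinna: if `S` is power-bounded and `α ∈ (0,1)` then
`T = αI + (1-α)S` is power-bounded and `‖T^n (I - T)‖ = O(n^{-1/2})`. -/
theorem stmt4 {X : Type*} [NormedAddCommGroup X] [NormedSpace ℂ X] [CompleteSpace X]
    (S : X →L[ℂ] X) (K : ℝ) (hK : ∀ n : ℕ, ‖S ^ n‖ ≤ K)
    (α : ℝ) (hα0 : 0 < α) (hα1 : α < 1)
    (T : X →L[ℂ] X) (hT : T = (α : ℂ) • (1 : X →L[ℂ] X) + ((1 - α : ℝ) : ℂ) • S) :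
    (∃ K' : ℝ, ∀ n : ℕ, ‖T ^ n‖ ≤ K') ∧
    ∃ M : ℝ, ∀ n : ℕ, 1 ≤ n → Real.sqrt n * ‖T ^ n * (1 - T)‖ ≤ M := by
  set p : ℝ := 1 - α with hpdef
  have hp0 : 0 < p := by simp only [hpdef]; linarith
  have hp1 : p < 1 := by simp only [hpdef]; linarith
  have hq0 : 0 < 1 - p := by linarith
  have hK0 : (0:ℝ) ≤ K := le_trans (norm_nonneg _) (hK 0)
  have hbnn : ∀ N k, 0 ≤ bin p N k := bin_nonneg hp0.le hp1.le
  -- binomial expansion of T^n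
  have hTn : ∀ n : ℕ, T^n = ∑ k ∈ range (n+1), ((bin p n k : ℝ) : ℂ) • S^k := by
    intro n
    have hc : Commute (((1 - α : ℝ) : ℂ) • S) ((α : ℂ) • (1 : X →L[ℂ] X)) :=
      ((Commute.one_right S).smul_left _).smul_right _
    rw [hT, add_comm, hc.add_pow]
    refine Finset.sum_congr rfl fun k hk => ?_
    have h1 : ((n.choose k : ℕ) : X →L[ℂ] X) = ((n.choose k : ℂ)) • 1 := by
      rw [← map_natCast (algebraMap ℂ (X →L[ℂ] X)), Algebra.algebraMap_eq_smul_one]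
    rw [smul_pow, smul_pow, one_pow, h1, smul_mul_assoc, smul_mul_assoc, mul_smul_comm,
      mul_smul_comm, mul_one, smul_smul, smul_smul]
    congr 1
    push_cast [bin, hpdef]
    ring
  -- power boundedness
  have hTbdd : ∀ n : ℕ, ‖T^n‖ ≤ K := by
    intro n
    calc ‖T^n‖ ≤ ∑ k ∈ range (n+1), bin p n k * K := by
          rw [hTn n]
          refine (norm_sum_le _ _).trans (Finset.sum_le_sum fun k _ => ?_)
          refine le_trans (ContinuousLinearMap.opNorm_smul_le _ _) ?_
          rw [Complex.norm_real, Real.norm_eq_abs, abs_of_nonneg (hbnn n k)]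
          exact mul_le_mul_of_nonneg_left (hK k) (hbnn n k)
      _ = K := by rw [← Finset.sum_mul, bin_sum, one_mul]
  refine ⟨⟨K, hTbdd⟩, ⟨p * K * Real.sqrt (1/(p*(1-p))), ?_⟩⟩
  intro n hn
  set den : ℝ := ((n:ℝ)+1)*p*(1-p) with hden
  have hden0 : 0 < den := by positivity
  set D : ℕ → ℝ := fun k => bin p (n+1) k * (((n:ℝ)+1)*p - k) / den with hD
  -- D k = bin p n k - prev k
  have hDk0 : D 0 = bin p n 0 := by
    have h := bin_diff0 p n
    show bin p (n+1) 0 * (((n:ℝ)+1)*p - (0:ℕ)) / den = bin p n 0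
    rw [hden, div_eq_iff (by positivity : ((n:ℝ)+1)*p*(1-p) ≠ 0)]
    push_cast
    linarith [h]
  have hDks : ∀ j : ℕ, D (j+1) = bin p n (j+1) - bin p n j := by
    intro j
    have h := bin_diff p n j
    show bin p (n+1) (j+1) * (((n:ℝ)+1)*p - ((j+1:ℕ):ℝ)) / den = bin p n (j+1) - bin p n j
    rw [hden, div_eq_iff (by positivity : ((n:ℝ)+1)*p*(1-p) ≠ 0)]
    push_cast
    push_cast at h
    linarith [h]
  -- 1 - T = p • (1 - S)
  have hpc : ((p:ℝ):ℂ) = 1 - (α:ℂ) := by rw [hpdef]; push_cast; ring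
  have h1T : (1 : X →L[ℂ] X) - T = ((p:ℝ):ℂ) • (1 - S) := by
    rw [hT, hpc]
    module
  -- key sum identity
  have key : T^n - T^n * S = ∑ k ∈ range (n+2), ((D k : ℝ):ℂ) • S^k := by
    have hsplit : ∀ k : ℕ, ((D k : ℝ):ℂ) • S^k
        = ((bin p n k : ℝ):ℂ) • S^k
          - (((if k = 0 then (0:ℝ) else bin p n (k-1)) : ℝ):ℂ) • S^k := by
      intro k
      cases k with
      | zero => rw [hDk0]; simp
      | succ j =>
          rw [hDks j, ← sub_smul]
          norm_num
    rw [Finset.sum_congr rfl fun k _ => hsplit k, Finset.sum_sub_distrib]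
    have hA : ∑ k ∈ range (n+2), ((bin p n k : ℝ):ℂ) • S^k = T^n := by
      rw [Finset.sum_range_succ]
      have : bin p n (n+1) = 0 := by
        unfold bin; rw [Nat.choose_succ_self]; simp
      rw [this, hTn n]
      simp
    have hB : ∑ k ∈ range (n+2),
        (((if k = 0 then (0:ℝ) else bin p n (k-1)) : ℝ):ℂ) • S^k = T^n * S := by
      rw [Finset.sum_range_succ', hTn n, Finset.sum_mul]
      simp [smul_mul_assoc, pow_succ]
    rw [hA, hB]
  -- norm bound on T^n (1 - T)
  have hnorm : ‖T^n * (1 - T)‖ ≤ p * (K * (Real.sqrt den / den)) := by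
    have hTnT : T^n * (1 - T) = ((p:ℝ):ℂ) • ∑ k ∈ range (n+2), ((D k : ℝ):ℂ) • S^k := by
      rw [h1T, mul_smul_comm, mul_sub, mul_one, key]
    rw [hTnT]
    refine le_trans (ContinuousLinearMap.opNorm_smul_le _ _) ?_
    rw [Complex.norm_real, Real.norm_eq_abs, abs_of_pos hp0]
    refine mul_le_mul_of_nonneg_left ?_ hp0.le
    calc ‖∑ k ∈ range (n+2), ((D k : ℝ):ℂ) • S^k‖
        ≤ ∑ k ∈ range (n+2), |D k| * K := by
          refine (norm_sum_le _ _).trans (Finset.sum_le_sum fun k _ => ?_)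
          refine le_trans (ContinuousLinearMap.opNorm_smul_le _ _) ?_
          rw [Complex.norm_real, Real.norm_eq_abs]
          exact mul_le_mul_of_nonneg_left (hK k) (abs_nonneg _)
      _ = K * ∑ k ∈ range (n+2), |D k| := by rw [← Finset.sum_mul, mul_comm]
      _ ≤ K * (Real.sqrt den / den) := by
          refine mul_le_mul_of_nonneg_left ?_ hK0
          have habs : ∀ k : ℕ, |D k| = bin p (n+1) k * |((n:ℝ)+1)*p - k| / den := by
            intro k
            rw [hD]
            rw [abs_div, abs_of_pos hden0, abs_mul, abs_of_nonneg (hbnn (n+1) k)]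
          rw [Finset.sum_congr rfl fun k _ => habs k, ← Finset.sum_div,
            div_le_div_iff_of_pos_right hden0]
          -- Cauchy-Schwarz
          calc ∑ k ∈ range (n+2), bin p (n+1) k * |((n:ℝ)+1)*p - k|
              = ∑ k ∈ range (n+2), Real.sqrt (bin p (n+1) k)
                  * Real.sqrt (bin p (n+1) k * (((n:ℝ)+1)*p - k)^2) := by
                refine Finset.sum_congr rfl fun k _ => ?_
                rw [Real.sqrt_mul (hbnn (n+1) k), Real.sqrt_sq_eq_abs,
                  ← mul_assoc, Real.mul_self_sqrt (hbnn (n+1) k)]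
            _ ≤ Real.sqrt (∑ k ∈ range (n+2), bin p (n+1) k)
                  * Real.sqrt (∑ k ∈ range (n+2), bin p (n+1) k * (((n:ℝ)+1)*p - k)^2) := by
                exact Real.sum_sqrt_mul_sqrt_le _ (fun k => hbnn (n+1) k)
                  (fun k => mul_nonneg (hbnn (n+1) k) (sq_nonneg _))
            _ = Real.sqrt den := by
                have h1 : ∑ k ∈ range (n+2), bin p (n+1) k = 1 := bin_sum p (n+1)
                have h2 : ∑ k ∈ range (n+2), bin p (n+1) k * (((n:ℝ)+1)*p - k)^2 = den := by
                  have := bin_variance p (n+1)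
                  push_cast at this
                  rw [hden]
                  rw [← this]
                rw [h1, h2, Real.sqrt_one, one_mul]
  -- final estimate
  calc Real.sqrt n * ‖T^n * (1 - T)‖ ≤ Real.sqrt n * (p * (K * (Real.sqrt den / den))) :=
        mul_le_mul_of_nonneg_left hnorm (Real.sqrt_nonneg _)
    _ = p * K * Real.sqrt ((n:ℝ)/den) := by
        rw [Real.sqrt_div_self', Real.sqrt_div (Nat.cast_nonneg n)]
        ring
    _ ≤ p * K * Real.sqrt (1/(p*(1-p))) := by
        have hle : (n:ℝ)/den ≤ 1/(p*(1-p)) := by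
          rw [hden, div_le_div_iff₀ (by positivity) (by positivity)]
          nlinarith [mul_pos hp0 hq0, Nat.cast_nonneg (α := ℝ) n]
        exact mul_le_mul_of_nonneg_left (Real.sqrt_le_sqrt hle) (by positivity)
end

section
/- Let T be an invertible isometry on a complex Banach space with σ(T) = {1}. Then T = I. -/
/-!
Write `T = 1 + a`. Since `σ(a) = {0}`, Gelfand's formula makes `‖a ^ k‖` decay faster than any
geometric sequence, so the binomial series `(1 + a) ^ z = ∑ₖ (z choose k) aᵏ` converges for every
`z : ℂ` and defines an entire function of exponential type zero. It satisfies
`(1 + a) ^ (z + 1) = T (1 + a) ^ z`, and `T` is an isometry, so its norm is `1`-periodic on the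
real line, hence bounded there. Phragmén–Lindelöf on the two half-planes, followed by Liouville,
shows that it is constant, so `T = (1 + a) ^ 1 = (1 + a) ^ 0 = 1`.
-/

open Filter Topology Bornology Asymptotics Complex Finset
open scoped Nat

theorem Ring.choose_eq_inv_factorial_mul_prod {R : Type*} [Field R] [CharZero R] (r : R) (k : ℕ) :
    Ring.choose r k = (k ! : R)⁻¹ * ∏ j ∈ range k, (r - j) := by
  rw [Ring.choose_eq_smul, smul_eq_mul, ← descPochhammer_eval_eq_prod_range,
    ← descPochhammer_map (algebraMap ℤ R), Polynomial.eval_map_algebraMap,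
    Polynomial.aeval_eq_smeval]

theorem norm_choose_le (z : ℂ) (k : ℕ) : ‖Ring.choose z k‖ ≤ (‖z‖ + k) ^ k / k ! := by
  rw [Ring.choose_eq_inv_factorial_mul_prod, norm_mul, norm_inv, norm_prod, Complex.norm_natCast,
    inv_mul_eq_div]
  gcongr
  calc ∏ j ∈ range k, ‖z - j‖ ≤ ∏ _j ∈ range k, (‖z‖ + k) := by
        refine prod_le_prod (fun _ _ => norm_nonneg _) fun j hj => ?_
        refine (norm_sub_le _ _).trans ?_
        rw [Complex.norm_natCast]
        gcongr
        exact (mem_range.1 hj).le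
    _ = (‖z‖ + k) ^ k := by rw [prod_const, card_range]

theorem norm_choose_le_mul_exp (z : ℂ) (k : ℕ) {ε : ℝ} (hε : 0 < ε) :
    ‖Ring.choose z k‖ ≤ (Real.exp ε / ε) ^ k * Real.exp (ε * ‖z‖) := by
  calc ‖Ring.choose z k‖ ≤ (‖z‖ + k) ^ k / k ! := norm_choose_le z k
    _ = (ε ^ k)⁻¹ * ((ε * (‖z‖ + k)) ^ k / k !) := by
        rw [mul_pow]; field_simp
    _ ≤ (ε ^ k)⁻¹ * Real.exp (ε * (‖z‖ + k)) := by
        gcongr; exact Real.pow_div_factorial_le_exp _ (by positivity) k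
    _ = (Real.exp ε / ε) ^ k * Real.exp (ε * ‖z‖) := by
        rw [div_pow, ← Real.exp_nat_mul, mul_add, Real.exp_add]; ring_nf

section BinomialPow

variable {A : Type*} [NormedRing A] [NormedAlgebra ℂ A] {a : A}

/-- `(1 + a) ^ z`, defined by the binomial series. -/
noncomputable def binomialPow (a : A) (z : ℂ) : A := ∑' k, Ring.choose z k • a ^ k

theorem binomialPow_zero : binomialPow a 0 = 1 := by
  rw [binomialPow, tsum_eq_single 0 fun k hk => by
    rw [Ring.choose_zero_pos ℂ (Nat.pos_of_ne_zero hk), zero_smul]]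
  simp

variable [CompleteSpace A]

theorem exists_norm_pow_le_mul_pow_of_spectralRadius_eq_zero
    (ha : spectralRadius ℂ a = 0) {δ : ℝ} (hδ : 0 < δ) : ∃ C, ∀ k, ‖a ^ k‖ ≤ C * δ ^ k := by
  have hlim := spectrum.pow_norm_pow_one_div_tendsto_nhds_spectralRadius a
  rw [ha] at hlim
  have hev : ∀ᶠ k : ℕ in atTop, ‖a ^ k‖ ≤ δ ^ k := by
    filter_upwards [hlim.eventually_lt_const (ENNReal.ofReal_pos.2 hδ), eventually_ge_atTop 1]
      with k hk hk1
    rw [ENNReal.ofReal_lt_ofReal_iff hδ, one_div] at hk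
    rw [← Real.rpow_inv_natCast_pow (norm_nonneg (a ^ k)) (by omega : k ≠ 0)]
    exact pow_le_pow_left₀ (by positivity) hk.le k
  have : (fun k => ‖a ^ k‖) =O[cofinite] fun k => δ ^ k := by
    rw [Nat.cofinite_eq_atTop]
    exact IsBigO.of_bound' (by simpa [abs_of_pos hδ] using hev)
  obtain ⟨C, hC⟩ := (isBigO_cofinite_iff fun k hk => absurd hk (pow_ne_zero k hδ.ne')).1 this
  exact ⟨C, fun k => by simpa [abs_of_pos hδ] using hC k⟩

theorem exists_norm_choose_smul_pow_le (ha : spectralRadius ℂ a = 0) {ε : ℝ} (hε : 0 < ε) :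
    ∃ C, ∀ (z : ℂ) k, ‖Ring.choose z k • a ^ k‖ ≤ C * (1 / 2) ^ k * Real.exp (ε * ‖z‖) := by
  obtain ⟨C, hC⟩ := exists_norm_pow_le_mul_pow_of_spectralRadius_eq_zero ha
    (δ := ε / (2 * Real.exp ε)) (by positivity)
  refine ⟨C, fun z k => ?_⟩
  calc ‖Ring.choose z k • a ^ k‖ ≤ ‖Ring.choose z k‖ * ‖a ^ k‖ := norm_smul_le _ _
    _ ≤ (Real.exp ε / ε) ^ k * Real.exp (ε * ‖z‖) * (C * (ε / (2 * Real.exp ε)) ^ k) := by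
        gcongr
        · exact norm_choose_le_mul_exp z k hε
        · exact hC k
    _ = C * (1 / 2) ^ k * Real.exp (ε * ‖z‖) := by
        have hhalf : Real.exp ε / ε * (ε / (2 * Real.exp ε)) = 1 / 2 := by field_simp
        rw [← hhalf, mul_pow]
        ring

theorem summable_choose_smul_pow (ha : spectralRadius ℂ a = 0) (z : ℂ) :
    Summable fun k => Ring.choose z k • a ^ k := by
  obtain ⟨C, hC⟩ := exists_norm_choose_smul_pow_le ha one_pos
  exact .of_norm_bounded ((summable_geometric_two.mul_left C).mul_right _) (hC z)

theorem exists_norm_binomialPow_le (ha : spectralRadius ℂ a = 0) {ε : ℝ} (hε : 0 < ε) :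
    ∃ C, ∀ z, ‖binomialPow a z‖ ≤ C * Real.exp (ε * ‖z‖) := by
  obtain ⟨C, hC⟩ := exists_norm_choose_smul_pow_le ha hε
  refine ⟨C * 2, fun z => tsum_of_norm_bounded ?_ (hC z)⟩
  exact (hasSum_geometric_two.mul_left C).mul_right _

theorem differentiable_binomialPow (ha : spectralRadius ℂ a = 0) :
    Differentiable ℂ (binomialPow a) := by
  obtain ⟨C, hC⟩ := exists_norm_choose_smul_pow_le ha one_pos
  intro z
  have hterm (k : ℕ) : Differentiable ℂ fun w : ℂ => Ring.choose w k • a ^ k := by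
    simp_rw [Ring.choose_eq_inv_factorial_mul_prod]
    fun_prop
  refine (differentiableOn_tsum_of_summable_norm
    ((summable_geometric_two.mul_left C).mul_right (Real.exp (1 * (‖z‖ + 1))))
    (fun k => (hterm k).differentiableOn) Metric.isOpen_ball fun k w hw => ?_).differentiableAt
    (Metric.ball_mem_nhds z one_pos)
  have hC0 : 0 ≤ C := by simpa using (norm_nonneg _).trans (hC 0 0)
  refine (hC w k).trans ?_
  gcongr
  have hw' : dist w z < 1 := hw
  exact (norm_le_norm_add_norm_sub' w z).trans (by rw [← dist_eq_norm]; linarith)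

theorem binomialPow_add_one (ha : spectralRadius ℂ a = 0) (z : ℂ) :
    binomialPow a (z + 1) = (1 + a) * binomialPow a z := by
  have hs := summable_choose_smul_pow ha z
  have hP : binomialPow a z = 1 + ∑' k, Ring.choose z (k + 1) • a ^ (k + 1) := by
    rw [binomialPow, hs.tsum_eq_zero_add, Ring.choose_zero_right, pow_zero, one_smul]
  calc binomialPow a (z + 1)
      = 1 + ∑' k, (a * (Ring.choose z k • a ^ k) + Ring.choose z (k + 1) • a ^ (k + 1)) := by
        rw [binomialPow, (summable_choose_smul_pow ha (z + 1)).tsum_eq_zero_add]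
        simp only [Ring.choose_zero_right, pow_zero, one_smul, Ring.choose_succ_succ, add_smul,
          mul_smul_comm, ← pow_succ']
    _ = 1 + (a * binomialPow a z + ∑' k, Ring.choose z (k + 1) • a ^ (k + 1)) := by
        rw [(hs.mul_left a).tsum_add ((summable_nat_add_iff 1).2 hs), hs.tsum_mul_left a,
          binomialPow]
    _ = (1 + ∑' k, Ring.choose z (k + 1) • a ^ (k + 1)) + a * binomialPow a z := by abel
    _ = (1 + a) * binomialPow a z := by rw [← hP, add_mul, one_mul]

theorem binomialPow_one (ha : spectralRadius ℂ a = 0) : binomialPow a 1 = 1 + a := by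
  simpa [binomialPow_zero] using binomialPow_add_one ha 0

theorem exists_norm_binomialPow_ofReal_le (ha : spectralRadius ℂ a = 0)
    (hiso : ∀ b : A, ‖(1 + a) * b‖ = ‖b‖) : ∃ C, ∀ x : ℝ, ‖binomialPow a x‖ ≤ C := by
  have hperiodic : Function.Periodic (fun x : ℝ => ‖binomialPow a x‖) 1 := fun x => by
    simp only [ofReal_add, ofReal_one, binomialPow_add_one ha, hiso]
  have hcont : Continuous fun x : ℝ => ‖binomialPow a x‖ :=
    ((differentiable_binomialPow ha).continuous.comp continuous_ofReal).norm
  obtain ⟨C, hC⟩ := (hperiodic.isBounded_of_continuous one_ne_zero hcont).bddAbove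
  exact ⟨C, fun x => hC (Set.mem_range_self x)⟩

end BinomialPow

section ExponentialTypeZero

variable {E : Type*} [NormedAddCommGroup E] [NormedSpace ℂ E]

theorem norm_le_mul_exp_im_of_bounded_on_real {F : ℂ → E} (hF : Differentiable ℂ F)
    {A C ε : ℝ} (hε : 0 ≤ ε) (hreal : ∀ x : ℝ, ‖F x‖ ≤ C)
    (hgrowth : ∀ z, ‖F z‖ ≤ A * Real.exp (ε * ‖z‖)) {z : ℂ} (hz : 0 ≤ z.im) :
    ‖F z‖ ≤ C * Real.exp (ε * z.im) := by
  have hA : 0 ≤ A := by simpa using (norm_nonneg _).trans (hgrowth 0)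
  -- The rotation `w ↦ I * w` carries the imaginary axis to the real line, and the damping
  -- factor makes `g` bounded on the positive real axis.
  set g : ℂ → E := fun w => exp (-ε * w) • F (I * w)
  have hg : Differentiable ℂ g := by fun_prop
  have hnorm_g : ∀ w, ‖g w‖ = Real.exp (-(ε * w.re)) * ‖F (I * w)‖ := fun w => by
    simp [g, norm_smul, norm_exp]
  have hg_le : ∀ w : ℂ, ‖g w‖ ≤ A * Real.exp (ε * (‖w‖ - w.re)) := fun w => by
    rw [hnorm_g, mul_sub, Real.exp_sub, mul_div, div_eq_inv_mul, ← Real.exp_neg]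
    gcongr
    simpa using hgrowth (I * w)
  have hexp : ∃ c < (2 : ℝ), ∃ B,
      g =O[cobounded ℂ ⊓ 𝓟 {w | 0 < w.re}] fun w => Real.exp (B * ‖w‖ ^ c) := by
    refine ⟨1, one_lt_two, ε, IsBigO.of_bound A ?_⟩
    filter_upwards [mem_inf_of_right (mem_principal_self _)] with w hw
    rw [Real.rpow_one, Real.norm_of_nonneg (Real.exp_pos _).le]
    refine (hg_le w).trans ?_
    gcongr
    linarith
  have hpos_real : IsBoundedUnder (· ≤ ·) atTop fun x : ℝ => ‖g x‖ := by
    refine isBoundedUnder_of_eventually_le (a := A) ?_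
    filter_upwards [eventually_ge_atTop 0] with x hx
    simpa [Real.norm_of_nonneg hx] using hg_le x
  have him : ∀ x : ℝ, ‖g (x * I)‖ ≤ C := fun x => by
    simpa [hnorm_g, mul_left_comm I, ← mul_assoc] using hreal (-x)
  have key := PhragmenLindelof.right_half_plane_of_bounded_on_real hg.diffContOnCl hexp hpos_real
    him (z := -I * z) (by simpa using hz)
  have hIz : I * (-I * z) = z := by rw [← mul_assoc, mul_neg, I_mul_I, neg_neg, one_mul]
  rw [hnorm_g, hIz, ← le_div_iff₀' (Real.exp_pos _), div_eq_mul_inv, ← Real.exp_neg,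
    neg_neg] at key
  simpa using key

theorem norm_le_of_bounded_on_real_of_growth {F : ℂ → E} (hF : Differentiable ℂ F) {C : ℝ}
    (hreal : ∀ x : ℝ, ‖F x‖ ≤ C)
    (hgrowth : ∀ ε > 0, ∃ A, ∀ z, ‖F z‖ ≤ A * Real.exp (ε * ‖z‖)) (z : ℂ) : ‖F z‖ ≤ C := by
  have hbound : ∀ ε > 0, ‖F z‖ ≤ C * Real.exp (ε * |z.im|) := fun ε hε => by
    obtain ⟨A, hA⟩ := hgrowth ε hε
    rcases le_total 0 z.im with hz | hz
    · rw [abs_of_nonneg hz]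
      exact norm_le_mul_exp_im_of_bounded_on_real hF hε.le hreal hA hz
    · rw [abs_of_nonpos hz, ← neg_im]
      simpa using norm_le_mul_exp_im_of_bounded_on_real (F := fun w => F (-w)) (by fun_prop)
        hε.le (fun x => by simpa using hreal (-x)) (fun w => by simpa using hA (-w))
        (z := -z) (by simpa using hz)
  have hlim : Tendsto (fun ε => C * Real.exp (ε * |z.im|)) (𝓝[>] 0) (𝓝 C) := by
    exact Continuous.tendsto' (by fun_prop) _ _ (by simp) |>.mono_left nhdsWithin_le_nhds
  exact ge_of_tendsto hlim (eventually_nhdsWithin_of_forall hbound)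

theorem Differentiable.apply_eq_apply_of_bounded_on_real_of_growth {F : ℂ → E}
    (hF : Differentiable ℂ F) {C : ℝ} (hreal : ∀ x : ℝ, ‖F x‖ ≤ C)
    (hgrowth : ∀ ε > 0, ∃ A, ∀ z, ‖F z‖ ≤ A * Real.exp (ε * ‖z‖)) (z w : ℂ) : F z = F w :=
  hF.apply_eq_apply_of_bounded (isBounded_iff_forall_norm_le.2
    ⟨C, by rintro _ ⟨z, rfl⟩; exact norm_le_of_bounded_on_real_of_growth hF hreal hgrowth z⟩) z w

end ExponentialTypeZero

theorem stmt7_general {X : Type*} [NormedAddCommGroup X] [NormedSpace ℂ X] [CompleteSpace X]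
    (T : X →L[ℂ] X) (hiso : ∀ x : X, ‖T x‖ = ‖x‖)
    (hspec : spectrum ℂ T = {1}) :
    T = 1 := by
  set a := T - 1
  have hT : 1 + a = T := add_sub_cancel 1 T
  have ha : spectralRadius ℂ a = 0 := by
    have hspec_a : spectrum ℂ a = {0} := by
      rw [show a = T - algebraMap ℂ _ 1 by simp [a], ← spectrum.sub_singleton_eq, hspec,
        Set.singleton_sub_singleton, sub_self]
    simp [spectralRadius, hspec_a]
  have hiso_mul (B : X →L[ℂ] X) : ‖(1 + a) * B‖ = ‖B‖ := by
    rw [hT]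
    exact ContinuousLinearMap.opNorm_ext _ _ fun x => hiso (B x)
  obtain ⟨C, hC⟩ := exists_norm_binomialPow_ofReal_le ha hiso_mul
  have hconst := (differentiable_binomialPow ha).apply_eq_apply_of_bounded_on_real_of_growth hC
    (fun ε hε => exists_norm_binomialPow_le ha hε) 1 0
  rwa [binomialPow_one ha, binomialPow_zero, hT] at hconst

/-- Gelfand's theorem: an invertible isometry with spectrum `{1}` is the identity. -/
theorem stmt7 {X : Type*} [NormedAddCommGroup X] [NormedSpace ℂ X] [CompleteSpace X]
    (T : X →L[ℂ] X) (hiso : ∀ x : X, ‖T x‖ = ‖x‖) (hbij : Function.Bijective T)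
    (hspec : spectrum ℂ T = {1}) :
    T = 1 :=
  stmt7_general T hiso hspec
end

section
/- Let T be a bounded linear operator on a Banach space X and let (x*_n)_{n∈ℤ} be a bounded complete trajectory for T*. With h defined as the discrete Carleman transform (h(z) = Σ_{n≥0} z^{−n−1} x*_n for |z| > 1, h(z) = −Σ_{n≥1} z^{n−1} x*_{−n} for |z| < 1), the identity h(w) − h(z) = (z − w)² (zI − T*)^{−2} h(w) + (z − w)(zI − T*)^{−2} x*_0 holds for all w, z with |w| < 1 < |z| and z in the resolvent set of T*. -/
/-!
Both branches of the Carleman transform solve `(λ - T*) h(λ) = x₀*`: shifting the series by one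
index with `T* x*ₙ = x*ₙ₊₁` gives this for `λ = w` inside and `λ = z` outside the unit disc.
Hence `h(z) = R x₀*` with `R = (zI - T*)⁻¹`, while `(zI - T*) h(w) = (z - w) h(w) + x₀*`;
applying `R` to the latter twice yields the identity.
-/

section Carleman

variable {𝕜 E : Type*} [NormedField 𝕜] [NormedAddCommGroup E] [NormedSpace 𝕜 E]

theorem resolvent_apply_eq_of_smul_sub_apply {A : E →L[𝕜] E} {z : 𝕜}
    (hz : z ∈ resolventSet 𝕜 A) {u v : E} (huv : z • u - A u = v) :
    resolvent A z v = u := by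
  have h : resolvent A z * (algebraMap 𝕜 (E →L[𝕜] E) z - A) = 1 :=
    Ring.inverse_mul_cancel _ hz
  simpa [← huv, mul_apply_eq_comp] using congr($h u)

theorem sub_resolvent_apply_of_smul_sub_apply {A : E →L[𝕜] E} {z w : 𝕜}
    (hz : z ∈ resolventSet 𝕜 A) {u v : E} (huv : w • u - A u = v) :
    u - resolvent A z v = (z - w) ^ 2 • (resolvent A z * resolvent A z) u +
      (z - w) • (resolvent A z * resolvent A z) v := by
  set R := resolvent A z
  -- `(z - A) u = (z - w) u + v`; apply `R` to it, then once more.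
  have hu : u = (z - w) • R u + R v := by
    rw [← map_smul, ← map_add, resolvent_apply_eq_of_smul_sub_apply hz]
    rw [← huv]; module
  have hRu : R u = (z - w) • R (R u) + R (R v) := by
    rw [← map_smul, ← map_add, ← hu]
  calc u - R v = (z - w) • R u := by rw [sub_eq_iff_eq_add, ← hu]
    _ = _ := by rw [hRu, mul_apply_eq_comp, mul_apply_eq_comp]; module

theorem summable_pow_smul_of_norm_le [CompleteSpace E] {u : ℕ → E} {M : ℝ}
    (hu : ∀ n, ‖u n‖ ≤ M) {w : 𝕜} (hw : ‖w‖ < 1) : Summable fun n ↦ w ^ n • u n := by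
  refine .of_norm_bounded ((summable_geometric_of_lt_one (norm_nonneg w) hw).mul_right M)
    fun n ↦ ?_
  rw [norm_smul, norm_pow]
  exact mul_le_mul_of_nonneg_left (hu n) (by positivity)

-- The paper's `h(λ)` is `carlemanInner x λ` for `|λ| < 1` and `carlemanOuter x λ` for `|λ| > 1`.
noncomputable def carlemanInner (x : ℤ → E) (w : 𝕜) : E := -∑' n : ℕ, w ^ n • x (-(n + 1) : ℤ)

noncomputable def carlemanOuter (x : ℤ → E) (z : 𝕜) : E := ∑' n : ℕ, (z ^ (n + 1))⁻¹ • x n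

variable [CompleteSpace E] {A : E →L[𝕜] E} {x : ℤ → E} {M : ℝ}

theorem smul_sub_apply_carlemanInner (hx : ∀ n, ‖x n‖ ≤ M) (hA : ∀ n, A (x n) = x (n + 1))
    {w : 𝕜} (hw : ‖w‖ < 1) : w • carlemanInner x w - A (carlemanInner x w) = x 0 := by
  have hsum : Summable fun n : ℕ ↦ w ^ n • x (-(n + 1) : ℤ) :=
    summable_pow_smul_of_norm_le (fun _ ↦ hx _) hw
  have hshift : A (∑' n : ℕ, w ^ n • x (-(n + 1) : ℤ)) = ∑' n : ℕ, w ^ n • x (-n : ℤ) := by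
    rw [A.map_tsum hsum]
    congr! 2 with n
    rw [map_smul, hA, neg_add, neg_add_cancel_right]
  have hsum₀ : Summable fun n : ℕ ↦ w ^ n • x (-n : ℤ) :=
    summable_pow_smul_of_norm_le (fun _ ↦ hx _) hw
  rw [carlemanInner, map_neg, hshift, hsum₀.tsum_eq_zero_add, smul_neg, ← hsum.tsum_const_smul]
  simp [pow_succ', smul_smul]

theorem smul_sub_apply_carlemanOuter (hx : ∀ n, ‖x n‖ ≤ M) (hA : ∀ n, A (x n) = x (n + 1))
    {z : 𝕜} (hz : 1 < ‖z‖) : z • carlemanOuter x z - A (carlemanOuter x z) = x 0 := by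
  have hz' : ‖z⁻¹‖ < 1 := by rw [norm_inv]; exact inv_lt_one_of_one_lt₀ hz
  have hsum : Summable fun n : ℕ ↦ (z ^ n)⁻¹ • x n := by
    simpa only [inv_pow] using summable_pow_smul_of_norm_le (fun _ ↦ hx _) hz'
  have hsum' : Summable fun n : ℕ ↦ (z ^ (n + 1))⁻¹ • x n := by
    simpa only [pow_succ', mul_inv, smul_smul] using hsum.const_smul z⁻¹
  have hz0 : z ≠ 0 := norm_pos_iff.mp (one_pos.trans hz)
  have hscale : z • carlemanOuter x z = ∑' n : ℕ, (z ^ n)⁻¹ • x n := by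
    rw [carlemanOuter, ← hsum'.tsum_const_smul]
    congr! 2 with n
    rw [smul_smul, pow_succ', mul_inv, mul_inv_cancel_left₀ hz0]
  rw [hscale, hsum.tsum_eq_zero_add, carlemanOuter, A.map_tsum hsum']
  simp [hA]

end Carleman

theorem stmt9_general {X : Type*} [NormedAddCommGroup X] [NormedSpace ℂ X]
    (Tstar : (X →L[ℂ] ℂ) →L[ℂ] (X →L[ℂ] ℂ))
    (xs : ℤ → (X →L[ℂ] ℂ)) (M : ℝ) (hM : ∀ n : ℤ, ‖xs n‖ ≤ M)
    (htraj : ∀ n : ℤ, Tstar (xs n) = xs (n + 1))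
    (w z : ℂ) (hw : ‖w‖ < 1) (hz : 1 < ‖z‖)
    (hres : z ∈ resolventSet ℂ Tstar)
    (R : (X →L[ℂ] ℂ) →L[ℂ] (X →L[ℂ] ℂ))
    (hR : R = Ring.inverse (@algebraMap ℂ ((X →L[ℂ] ℂ) →L[ℂ] (X →L[ℂ] ℂ)) _ ContinuousLinearMap.semiring _ z - Tstar)) :
    (-∑' n : ℕ, w ^ n • xs (-(n + 1) : ℤ)) - (∑' n : ℕ, (z ^ (n + 1))⁻¹ • xs n) =
      (z - w) ^ 2 • (R * R) (-∑' n : ℕ, w ^ n • xs (-(n + 1) : ℤ)) +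
        (z - w) • (R * R) (xs 0) := by
  have houter : resolvent Tstar z (xs 0) = carlemanOuter xs z :=
    resolvent_apply_eq_of_smul_sub_apply hres (smul_sub_apply_carlemanOuter hM htraj hz)
  have hidentity :=
    sub_resolvent_apply_of_smul_sub_apply hres (smul_sub_apply_carlemanInner hM htraj hw)
  rw [houter] at hidentity
  subst hR
  exact hidentity

/-- The resolvent identity for the discrete Carleman transform of a bounded complete
trajectory of `T*`:
`h(w) - h(z) = (z-w)^2 (zI - T*)⁻² h(w) + (z-w)(zI - T*)⁻² x₀*`. -/
theorem stmt9 {X : Type*} [NormedAddCommGroup X] [NormedSpace ℂ X] [CompleteSpace X]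
    (T : X →L[ℂ] X) (Tstar : (X →L[ℂ] ℂ) →L[ℂ] (X →L[ℂ] ℂ))
    (hTstar : ∀ (f : X →L[ℂ] ℂ) (x : X), Tstar f x = f (T x))
    (xs : ℤ → (X →L[ℂ] ℂ)) (M : ℝ) (hM : ∀ n : ℤ, ‖xs n‖ ≤ M)
    (htraj : ∀ n : ℤ, Tstar (xs n) = xs (n + 1))
    (w z : ℂ) (hw : ‖w‖ < 1) (hz : 1 < ‖z‖)
    (hres : z ∈ resolventSet ℂ Tstar)
    (R : (X →L[ℂ] ℂ) →L[ℂ] (X →L[ℂ] ℂ))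
    (hR : R = Ring.inverse (@algebraMap ℂ ((X →L[ℂ] ℂ) →L[ℂ] (X →L[ℂ] ℂ)) _ ContinuousLinearMap.semiring _ z - Tstar)) :
    (-∑' n : ℕ, w ^ n • xs (-(n + 1) : ℤ)) - (∑' n : ℕ, (z ^ (n + 1))⁻¹ • xs n) =
      (z - w) ^ 2 • (R * R) (-∑' n : ℕ, w ^ n • xs (-(n + 1) : ℤ)) +
        (z - w) • (R * R) (xs 0) :=
  stmt9_general Tstar xs M hM htraj w z hw hz hres R hR
end

section
/- Let T be a power-bounded operator on a Banach space X, let M ⊆ X* be the set of functionals x* through which there exists a bounded complete trajectory for T*, and let X₀ = {x ∈ X : ‖T^n x‖ → 0}. Then the annihilator of M in X equals X₀. -/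
/-!
If `‖Tⁿ x‖ ↛ 0`, power-boundedness gives `‖Tᵐ x‖ ≥ δ > 0` for every `m`. Pick norming
functionals `φₙ` with `φₙ (Tⁿ x) = ‖Tⁿ x‖` and let `x*ₖ` be the weak-* limit of `φₙ ∘ Tⁿ⁺ᵏ` along a
free ultrafilter (Banach–Alaoglu): this is a bounded complete trajectory for `T*` with
`Re x*₀ x ≥ δ`. Conversely, along a bounded trajectory `x*₀ x = x*₋ₙ (Tⁿ x)`, which is at most
`C ‖Tⁿ x‖` in norm.
-/

open Filter Topology

section

variable {𝕜 X : Type*} [RCLike 𝕜] [NormedAddCommGroup X] [NormedSpace 𝕜 X]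

theorem StrongDual.exists_tendsto_apply_of_norm_le {α : Type*} (U : Ultrafilter α)
    (φ : α → StrongDual 𝕜 X) {C : ℝ} (hφ : ∀ a, ‖φ a‖ ≤ C) :
    ∃ ψ : StrongDual 𝕜 X, ‖ψ‖ ≤ C ∧ ∀ x, Tendsto (fun a => φ a x) U (𝓝 (ψ x)) := by
  have hU : (U.map (StrongDual.toWeakDual ∘ φ) : Filter (WeakDual 𝕜 X)) ≤
      𝓟 (WeakDual.toStrongDual ⁻¹' Metric.closedBall 0 C) := by
    rw [Ultrafilter.coe_map]
    exact tendsto_principal.mpr <| Eventually.of_forall fun a => by simpa using hφ a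
  obtain ⟨ψ, hψC, hψ⟩ :=
    (WeakDual.isCompact_closedBall (0 : StrongDual 𝕜 X) C).ultrafilter_le_nhds _ hU
  refine ⟨WeakDual.toStrongDual ψ, by simpa using hψC, fun x => ?_⟩
  exact ((WeakDual.eval_continuous x).tendsto ψ).comp hψ

variable {T : X →L[𝕜] X}

theorem trajectory_apply_pow_apply {xs : ℤ → StrongDual 𝕜 X}
    (hxs : ∀ k, (xs k).comp T = xs (k + 1)) (k : ℤ) (n : ℕ) (x : X) :
    xs k ((T ^ n) x) = xs (k + n) x := by
  induction n generalizing k with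
  | zero => simp
  | succ n ih =>
    rw [pow_succ', mul_apply_eq_comp, ← ContinuousLinearMap.comp_apply, hxs, ih]
    push_cast
    ring_nf

theorem trajectory_apply_eq_zero_of_tendsto {xs : ℤ → StrongDual 𝕜 X}
    (hxs : ∀ k, (xs k).comp T = xs (k + 1)) {C : ℝ} (hC : ∀ k, ‖xs k‖ ≤ C) {x : X}
    (hx : Tendsto (fun n : ℕ => ‖(T ^ n) x‖) atTop (𝓝 0)) : xs 0 x = 0 := by
  have hCx : Tendsto (fun n : ℕ => C * ‖(T ^ n) x‖) atTop (𝓝 0) := by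
    simpa only [mul_zero] using hx.const_mul C
  refine norm_le_zero_iff.mp <| ge_of_tendsto' hCx fun n => ?_
  calc ‖xs 0 x‖ = ‖xs (-n) ((T ^ n) x)‖ := by rw [trajectory_apply_pow_apply hxs]; simp
    _ ≤ ‖xs (-n)‖ * ‖(T ^ n) x‖ := (xs _).le_opNorm _
    _ ≤ C * ‖(T ^ n) x‖ := by gcongr; exact hC _

theorem exists_pos_le_norm_pow_apply {K : ℝ} (hK : ∀ n, ‖T ^ n‖ ≤ K) {x : X}
    (hx : ¬Tendsto (fun n : ℕ => ‖(T ^ n) x‖) atTop (𝓝 0)) :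
    ∃ δ > 0, ∀ m, δ ≤ ‖(T ^ m) x‖ := by
  contrapose! hx
  refine Metric.tendsto_atTop.mpr fun ε hε => ?_
  obtain ⟨m, hm⟩ := hx (ε / (|K| + 1)) (by positivity)
  refine ⟨m, fun n hn => ?_⟩
  rw [lt_div_iff₀ (by positivity)] at hm
  rw [dist_zero_right, norm_norm]
  calc ‖(T ^ n) x‖ = ‖(T ^ (n - m)) ((T ^ m) x)‖ := by
        rw [← mul_apply_eq_comp, ← pow_add, Nat.sub_add_cancel hn]
    _ ≤ ‖T ^ (n - m)‖ * ‖(T ^ m) x‖ := (T ^ (n - m)).le_opNorm _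
    _ ≤ |K| * ‖(T ^ m) x‖ := by gcongr; exact (hK _).trans (le_abs_self K)
    _ < ε := by nlinarith [norm_nonneg ((T ^ m) x)]

theorem exists_trajectory_tendsto_apply_pow_apply {K C : ℝ} (hK : ∀ n, ‖T ^ n‖ ≤ K)
    (φ : ℕ → StrongDual 𝕜 X) (hφ : ∀ n, ‖φ n‖ ≤ C) :
    ∃ xs : ℤ → StrongDual 𝕜 X, (∀ k, (xs k).comp T = xs (k + 1)) ∧ (∀ k, ‖xs k‖ ≤ C * K) ∧
      ∀ x, Tendsto (fun n => φ n ((T ^ n) x)) (hyperfilter ℕ) (𝓝 (xs 0 x)) := by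
  have hC : 0 ≤ C := (norm_nonneg _).trans (hφ 0)
  have hbound (k : ℤ) (n : ℕ) : ‖(φ n).comp (T ^ (n + k).toNat)‖ ≤ C * K :=
    ((φ n).opNorm_comp_le _).trans (mul_le_mul (hφ n) (hK _) (norm_nonneg _) hC)
  -- `toNat` is only a junk value for the finitely many `n < -k`, which a free ultrafilter ignores.
  choose xs hxsC hxs using fun k : ℤ =>
    StrongDual.exists_tendsto_apply_of_norm_le (hyperfilter ℕ) _ (hbound k)
  refine ⟨xs, fun k => ?_, hxsC, fun x => by simpa using hxs 0 x⟩
  ext y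
  refine tendsto_nhds_unique (hxs k (T y)) ((hxs (k + 1) y).congr' ?_)
  filter_upwards [(eventually_ge_atTop k.natAbs).filter_mono Nat.hyperfilter_le_atTop] with n hn
  have hshift : (n + (k + 1)).toNat = (n + k).toNat + 1 := by omega
  rw [ContinuousLinearMap.comp_apply, ContinuousLinearMap.comp_apply, hshift, pow_succ,
    mul_apply_eq_comp]

theorem exists_bounded_trajectory_apply_ne_zero {K : ℝ} (hK : ∀ n, ‖T ^ n‖ ≤ K) {x : X} {δ : ℝ}
    (hδ : 0 < δ) (hx : ∀ m, δ ≤ ‖(T ^ m) x‖) :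
    ∃ xs : ℤ → StrongDual 𝕜 X, (∀ k, (xs k).comp T = xs (k + 1)) ∧ (∃ C, ∀ k, ‖xs k‖ ≤ C) ∧
      xs 0 x ≠ 0 := by
  choose φ hφ hφx using fun n => exists_dual_vector'' 𝕜 ((T ^ n) x)
  obtain ⟨xs, hrec, hbd, hlim⟩ := exists_trajectory_tendsto_apply_pow_apply hK φ hφ
  refine ⟨xs, hrec, ⟨_, hbd⟩, fun h0 => ?_⟩
  have : δ ≤ RCLike.re (xs 0 x) :=
    ge_of_tendsto ((RCLike.continuous_re.tendsto _).comp (hlim x))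
      (Eventually.of_forall fun n => by
        rw [Function.comp_apply, hφx n, RCLike.ofReal_re]
        exact hx n)
  simp [h0] at this
  linarith

end

theorem stmt10_general {X : Type*} [NormedAddCommGroup X] [NormedSpace ℂ X]
    (T : X →L[ℂ] X) (hpb : ∃ K : ℝ, ∀ n : ℕ, ‖T ^ n‖ ≤ K) :
    {x : X | ∀ f : X →L[ℂ] ℂ,
        (∃ xs : ℤ → (X →L[ℂ] ℂ), xs 0 = f ∧ (∀ n : ℤ, (xs n).comp T = xs (n + 1)) ∧
          ∃ C : ℝ, ∀ n : ℤ, ‖xs n‖ ≤ C) → f x = 0} =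
      {x : X | Tendsto (fun n : ℕ => ‖(T ^ n) x‖) atTop (𝓝 0)} := by
  obtain ⟨K, hK⟩ := hpb
  ext x
  constructor
  · intro hx
    by_contra hnot
    obtain ⟨δ, hδ, hδx⟩ := exists_pos_le_norm_pow_apply hK hnot
    obtain ⟨xs, hrec, hbd, hne⟩ := exists_bounded_trajectory_apply_ne_zero hK hδ hδx
    exact hne (hx (xs 0) ⟨xs, rfl, hrec, hbd⟩)
  · rintro hx f ⟨xs, rfl, hrec, C, hC⟩
    exact trajectory_apply_eq_zero_of_tendsto hrec hC hx

/-- The annihilator of the set of functionals through which there is a bounded complete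
trajectory for `T*` equals the space of vectors whose orbit under `T` tends to zero. -/
theorem stmt10 {X : Type*} [NormedAddCommGroup X] [NormedSpace ℂ X] [CompleteSpace X]
    (T : X →L[ℂ] X) (hpb : ∃ K : ℝ, ∀ n : ℕ, ‖T ^ n‖ ≤ K) :
    {x : X | ∀ f : X →L[ℂ] ℂ,
        (∃ xs : ℤ → (X →L[ℂ] ℂ), xs 0 = f ∧ (∀ n : ℤ, (xs n).comp T = xs (n + 1)) ∧
          ∃ C : ℝ, ∀ n : ℤ, ‖xs n‖ ≤ C) → f x = 0} =
      {x : X | Tendsto (fun n : ℕ => ‖(T ^ n) x‖) atTop (𝓝 0)} :=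
  stmt10_general T hpb
end

section
/- Let Y₁, …, Y_N be closed subspaces of a Hilbert space X with orthogonal projections P₁, …, P_N, let Y = Y₁ ∩ ⋯ ∩ Y_N with orthogonal projection P, and set T = P_N ⋯ P₁. Then Ker(I − T) = Y. -/
/-!
Orthogonal projections are contractions that fix every vector whose norm they preserve, by
Pythagoras `‖x‖² = ‖P x‖² + ‖x - P x‖²`. If `T x = x` with `T = P_N S`, then
`‖x‖ = ‖P_N (S x)‖ ≤ ‖S x‖ ≤ ‖x‖`, so `P_N` preserves the norm of `S x`, hence fixes it, and
`S x = x`; induction on the number of factors shows that every `P_k` fixes `x`.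
-/

namespace List

variable {𝕜 E : Type*} [Semiring 𝕜] [SeminormedAddCommGroup E] [Module 𝕜 E]

theorem norm_prod_apply_le (L : List (E →L[𝕜] E)) (hle : ∀ Q ∈ L, ∀ z, ‖Q z‖ ≤ ‖z‖) (x : E) :
    ‖L.prod x‖ ≤ ‖x‖ := by
  induction L with
  | nil => simp
  | cons Q L ih =>
    rw [prod_cons, mul_apply_eq_comp]
    exact (hle Q mem_cons_self _).trans (ih fun R hR => hle R (mem_cons_of_mem _ hR))

theorem prod_apply_eq_self_iff (L : List (E →L[𝕜] E)) (hle : ∀ Q ∈ L, ∀ z, ‖Q z‖ ≤ ‖z‖)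
    (hrigid : ∀ Q ∈ L, ∀ z, ‖Q z‖ = ‖z‖ → Q z = z) (x : E) :
    L.prod x = x ↔ ∀ Q ∈ L, Q x = x := by
  induction L with
  | nil => simp
  | cons Q L ih =>
    have hleL : ∀ R ∈ L, ∀ z, ‖R z‖ ≤ ‖z‖ := fun R hR => hle R (mem_cons_of_mem _ hR)
    rw [prod_cons, mul_apply_eq_comp, forall_mem_cons,
      ← ih hleL fun R hR => hrigid R (mem_cons_of_mem _ hR)]
    constructor
    · intro hx
      have hnorm : ‖L.prod x‖ = ‖x‖ := le_antisymm (L.norm_prod_apply_le hleL x)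
        (calc ‖x‖ = ‖Q (L.prod x)‖ := by rw [hx]
          _ ≤ ‖L.prod x‖ := hle Q mem_cons_self _)
      have hQ : Q (L.prod x) = L.prod x := hrigid Q mem_cons_self _ (by rw [hx, hnorm])
      have hL : L.prod x = x := hQ.symm.trans hx
      exact ⟨by rwa [hL] at hQ, hL⟩
    · rintro ⟨hQ, hL⟩
      rw [hL, hQ]

end List

section OrthogonalProjection

variable {𝕜 E : Type*} [RCLike 𝕜] [NormedAddCommGroup E] [InnerProductSpace 𝕜 E]
  {K : Submodule 𝕜 E} {P : E →L[𝕜] E}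

theorem norm_sq_add_norm_sub_sq_of_mem_orthogonal (hmem : ∀ x, P x ∈ K)
    (horth : ∀ x, x - P x ∈ Kᗮ) (z : E) : ‖P z‖ ^ 2 + ‖z - P z‖ ^ 2 = ‖z‖ ^ 2 := by
  have h := norm_add_sq_eq_norm_sq_add_norm_sq_of_inner_eq_zero (P z) (z - P z)
    (K.inner_right_of_mem_orthogonal (hmem z) (horth z))
  rw [add_sub_cancel] at h
  simp only [← h, sq]

theorem norm_apply_le_of_mem_orthogonal (hmem : ∀ x, P x ∈ K)
    (horth : ∀ x, x - P x ∈ Kᗮ) (z : E) : ‖P z‖ ≤ ‖z‖ := by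
  refine (sq_le_sq₀ (norm_nonneg _) (norm_nonneg _)).mp ?_
  rw [← norm_sq_add_norm_sub_sq_of_mem_orthogonal hmem horth z]
  exact le_add_of_nonneg_right (sq_nonneg _)

theorem apply_eq_self_of_norm_eq_of_mem_orthogonal (hmem : ∀ x, P x ∈ K)
    (horth : ∀ x, x - P x ∈ Kᗮ) (z : E) (hz : ‖P z‖ = ‖z‖) : P z = z := by
  have h := norm_sq_add_norm_sub_sq_of_mem_orthogonal hmem horth z
  rw [hz, add_eq_left, sq_eq_zero_iff, norm_eq_zero, sub_eq_zero] at h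
  exact h.symm

end OrthogonalProjection

theorem stmt12_general {X : Type*} [NormedAddCommGroup X] [InnerProductSpace ℂ X]
    (N : ℕ) (Y : Fin N → Submodule ℂ X)
    (P : Fin N → (X →L[ℂ] X))
    (hmem : ∀ k x, P k x ∈ Y k)
    (hfix : ∀ k, ∀ y ∈ Y k, P k y = y)
    (horth : ∀ k x, x - P k x ∈ (Y k)ᗮ) :
    LinearMap.ker (((1 : X →L[ℂ] X) - (List.ofFn P).reverse.prod : X →L[ℂ] X) : X →ₗ[ℂ] X) = ⨅ k, Y k := by
  have hforall {p : (X →L[ℂ] X) → Prop} : (∀ Q ∈ (List.ofFn P).reverse, p Q) ↔ ∀ k, p (P k) := by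
    simp only [List.mem_reverse, List.forall_mem_ofFn_iff]
  have hT (x : X) : (List.ofFn P).reverse.prod x = x ↔ ∀ k, P k x = x := by
    rw [List.prod_apply_eq_self_iff _
      (hforall.mpr fun k => norm_apply_le_of_mem_orthogonal (hmem k) (horth k))
      (hforall.mpr fun k => apply_eq_self_of_norm_eq_of_mem_orthogonal (hmem k) (horth k)),
      hforall]
  ext x
  rw [LinearMap.mem_ker, ContinuousLinearMap.coe_coe, sub_apply,
    one_apply_eq_self, sub_eq_zero, eq_comm, hT, Submodule.mem_iInf]
  exact forall_congr' fun k => ⟨fun hk => hk ▸ hmem k x, hfix k x⟩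

/-- For the product `T = P_N ⋯ P_1` of orthogonal projections onto closed subspaces
`Y_1, …, Y_N` of a Hilbert space, `Ker(I - T) = Y_1 ∩ ⋯ ∩ Y_N`. -/
theorem stmt12 {X : Type*} [NormedAddCommGroup X] [InnerProductSpace ℂ X] [CompleteSpace X]
    (N : ℕ) (Y : Fin N → Submodule ℂ X) (hYc : ∀ k, IsClosed (Y k : Set X))
    (P : Fin N → (X →L[ℂ] X))
    (hmem : ∀ k x, P k x ∈ Y k)
    (hfix : ∀ k, ∀ y ∈ Y k, P k y = y)
    (horth : ∀ k x, x - P k x ∈ (Y k)ᗮ) :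
    LinearMap.ker (((1 : X →L[ℂ] X) - (List.ofFn P).reverse.prod : X →L[ℂ] X) : X →ₗ[ℂ] X) = ⨅ k, Y k :=
  stmt12_general N Y P hmem hfix horth
end

section
/- Let Y₁, …, Y_N be closed subspaces of a Hilbert space X, P_k the orthogonal projection onto Y_k, P the orthogonal projection onto Y = Y₁ ∩ ⋯ ∩ Y_N, and T = P_N ⋯ P₁. Then for every x ∈ X, ‖T^n x − P x‖ → 0 as n → ∞ (Halperin's theorem). -/
/-!
A product `T` of orthogonal projections satisfies `‖x - T x‖² ≤ K (‖x‖² - ‖T x‖²)` for some `K`: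
each factor does so with `K = 1` by Pythagoras, and the condition survives composition. Since
`‖Tⁿ x‖` decreases, the right-hand side at `Tⁿ x` tends to zero, so `Tⁿ (x - T x) → 0`. The
powers of `T` are contractions, hence `Tⁿ z → 0` on the closure of the range of `1 - T`, which is
the orthogonal complement of the fixed space of `T`; and a vector is fixed by `T` only if it is
fixed by every factor, so that fixed space is `Y₁ ∩ ⋯ ∩ Y_N`.
-/

open Filter Topology

open scoped InnerProductSpace

section ConditionK

variable {𝕜 E : Type*} [RCLike 𝕜] [NormedAddCommGroup E] [NormedSpace 𝕜 E]

/-- Condition (K) of Badea, Grivaux and Müller. -/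
def SatisfiesConditionK (K : ℝ) (T : E →L[𝕜] E) : Prop :=
  ∀ x, ‖x - T x‖ ^ 2 ≤ K * (‖x‖ ^ 2 - ‖T x‖ ^ 2)

theorem satisfiesConditionK_one (K : ℝ) : SatisfiesConditionK K (1 : E →L[𝕜] E) := by
  simp [SatisfiesConditionK]

namespace SatisfiesConditionK

variable {K : ℝ} {T : E →L[𝕜] E}

theorem norm_apply_le (hK : 0 ≤ K) (hT : SatisfiesConditionK K T) (x : E) : ‖T x‖ ≤ ‖x‖ := by
  by_contra! h
  have hdiff : ‖T x‖ - ‖x‖ ≤ ‖x - T x‖ := by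
    rw [norm_sub_rev]; exact norm_sub_norm_le _ _
  have hpos : 0 < ‖x - T x‖ ^ 2 := pow_pos ((sub_pos.2 h).trans_le hdiff) 2
  have hneg : K * (‖x‖ ^ 2 - ‖T x‖ ^ 2) ≤ 0 :=
    mul_nonpos_of_nonneg_of_nonpos hK (by nlinarith [norm_nonneg x])
  linarith [hT x]

theorem lipschitzWith_one (hK : 0 ≤ K) (hT : SatisfiesConditionK K T) : LipschitzWith 1 T :=
  LipschitzWith.of_dist_le_mul fun x y => by
    simpa [dist_eq_norm, ← map_sub] using hT.norm_apply_le hK (x - y)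

theorem mul {a b : ℝ} {A B : E →L[𝕜] E} (ha : 0 ≤ a) (hb : 0 ≤ b)
    (hA : SatisfiesConditionK a A) (hB : SatisfiesConditionK b B) :
    SatisfiesConditionK (2 * (a + b)) (B * A) := by
  intro x
  rw [mul_apply_eq_comp]
  have hBA : ‖B (A x)‖ ^ 2 ≤ ‖A x‖ ^ 2 := by gcongr; exact hB.norm_apply_le hb _
  have hA' : ‖A x‖ ^ 2 ≤ ‖x‖ ^ 2 := by gcongr; exact hA.norm_apply_le ha _
  calc ‖x - B (A x)‖ ^ 2 ≤ (‖x - A x‖ + ‖A x - B (A x)‖) ^ 2 := by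
        gcongr; exact norm_sub_le_norm_sub_add_norm_sub _ _ _
    _ ≤ 2 * ‖x - A x‖ ^ 2 + 2 * ‖A x - B (A x)‖ ^ 2 := by
        nlinarith [sq_nonneg (‖x - A x‖ - ‖A x - B (A x)‖)]
    _ ≤ 2 * (a * (‖x‖ ^ 2 - ‖A x‖ ^ 2)) + 2 * (b * (‖A x‖ ^ 2 - ‖B (A x)‖ ^ 2)) := by
        gcongr
        exacts [hA x, hB (A x)]
    _ ≤ 2 * (a + b) * (‖x‖ ^ 2 - ‖B (A x)‖ ^ 2) := by
        nlinarith [mul_nonneg ha (sub_nonneg.2 hBA), mul_nonneg hb (sub_nonneg.2 hA')]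

theorem _root_.exists_satisfiesConditionK_list_prod (hK : 0 ≤ K) :
    ∀ {l : List (E →L[𝕜] E)}, (∀ Q ∈ l, SatisfiesConditionK K Q) →
      ∃ K' ≥ 0, SatisfiesConditionK K' l.prod
  | [], _ => ⟨0, le_rfl, satisfiesConditionK_one (𝕜 := 𝕜) (E := E) 0⟩
  | Q :: l, hl => by
    obtain ⟨K', hK'0, hK'⟩ :=
      exists_satisfiesConditionK_list_prod hK fun R hR => hl R (List.mem_cons_of_mem _ hR)
    rw [List.prod_cons]
    exact ⟨_, by positivity, hK'.mul hK'0 hK (hl Q List.mem_cons_self)⟩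

theorem apply_eq_self_of_apply_apply_eq_self (hK : 0 ≤ K) (hT : SatisfiesConditionK K T)
    {A : E →L[𝕜] E} (hA : ∀ x, ‖A x‖ ≤ ‖x‖) {x : E} (h : T (A x) = x) : A x = x := by
  have hnorm : ‖T (A x)‖ = ‖A x‖ :=
    le_antisymm (hT.norm_apply_le hK _) (h.symm ▸ hA x)
  have hsq : ‖A x - T (A x)‖ ^ 2 ≤ 0 := by simpa [hnorm] using hT (A x)
  have : A x = T (A x) := sub_eq_zero.1 (by simpa using hsq)
  rw [this, h]

theorem list_prod_apply_eq_self_iff (hK : 0 ≤ K) :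
    ∀ {l : List (E →L[𝕜] E)}, (∀ Q ∈ l, SatisfiesConditionK K Q) →
      ∀ x, l.prod x = x ↔ ∀ Q ∈ l, Q x = x
  | [], _, x => by simp
  | Q :: l, hl, x => by
    have hl' : ∀ R ∈ l, SatisfiesConditionK K R := fun R hR => hl R (List.mem_cons_of_mem _ hR)
    obtain ⟨K', hK'0, hK'⟩ := exists_satisfiesConditionK_list_prod hK hl'
    rw [List.prod_cons, mul_apply_eq_comp, List.forall_mem_cons,
      ← list_prod_apply_eq_self_iff hK hl' x]
    constructor
    · intro h
      have hfix := (hl Q List.mem_cons_self).apply_eq_self_of_apply_apply_eq_self hK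
        (hK'.norm_apply_le hK'0) h
      exact ⟨by rwa [hfix] at h, hfix⟩
    · rintro ⟨hQ, hfix⟩
      rw [hfix, hQ]

theorem tendsto_pow_apply_sub (hK : 0 ≤ K) (hT : SatisfiesConditionK K T) (x : E) :
    Tendsto (fun n => (T ^ n) (x - T x)) atTop (𝓝 0) := by
  set c : ℕ → ℝ := fun n => ‖(T ^ n) x‖
  have hc : Tendsto c atTop (𝓝 (⨅ n, c n)) := by
    refine tendsto_atTop_ciInf (antitone_nat_of_succ_le fun n => ?_) ⟨0, ?_⟩
    · simpa only [c, pow_succ', mul_apply_eq_comp] using hT.norm_apply_le hK _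
    · rintro _ ⟨n, rfl⟩; exact norm_nonneg _
  have hstep : ∀ n, (T ^ n) (x - T x) = (T ^ n) x - T ((T ^ n) x) := fun n => by
    rw [map_sub, ← mul_apply_eq_comp, ← pow_succ, pow_succ', mul_apply_eq_comp]
  have hbound : ∀ n, ‖(T ^ n) (x - T x)‖ ^ 2 ≤ K * (c n ^ 2 - c (n + 1) ^ 2) := fun n => by
    simpa only [hstep, c, pow_succ', mul_apply_eq_comp] using hT ((T ^ n) x)
  have hlim : Tendsto (fun n => K * (c n ^ 2 - c (n + 1) ^ 2)) atTop (𝓝 0) := by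
    simpa using ((hc.pow 2).sub ((hc.comp (tendsto_add_atTop_nat 1)).pow 2)).const_mul K
  have hsq : Tendsto (fun n => ‖(T ^ n) (x - T x)‖ ^ 2) atTop (𝓝 0) :=
    tendsto_of_tendsto_of_tendsto_of_le_of_le tendsto_const_nhds hlim (fun n => by positivity)
      hbound
  rw [tendsto_zero_iff_norm_tendsto_zero]
  simpa using hsq.sqrt

end SatisfiesConditionK

theorem ContinuousLinearMap.isClosed_setOf_tendsto_pow_apply_zero {T : E →L[𝕜] E}
    (hT : LipschitzWith 1 T) : IsClosed {x | Tendsto (fun n => (T ^ n) x) atTop (𝓝 0)} := by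
  have hpow : ∀ n : ℕ, LipschitzWith 1 (T ^ n) := fun n => by
    simpa [FunLike.coe_pow_eq_iterate] using hT.iterate n
  exact (LipschitzWith.uniformEquicontinuous _ 1 hpow).equicontinuous.isClosed_setOfPred_tendsto
    continuous_const

end ConditionK

section InnerProduct

variable {𝕜 E : Type*} [RCLike 𝕜] [NormedAddCommGroup E] [InnerProductSpace 𝕜 E]

theorem satisfiesConditionK_one_of_inner_eq_zero {Q : E →L[𝕜] E}
    (hQ : ∀ x, ⟪Q x, x - Q x⟫_𝕜 = 0) : SatisfiesConditionK 1 Q := fun x => by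
  have h := norm_add_sq_eq_norm_sq_add_norm_sq_of_inner_eq_zero (Q x) (x - Q x) (hQ x)
  rw [add_sub_cancel] at h
  nlinarith

theorem ContinuousLinearMap.orthogonal_range_one_sub_le_eqLocus {T : E →L[𝕜] E}
    (hT : ∀ x, ‖T x‖ ≤ ‖x‖) :
    (LinearMap.range ((1 - T : E →L[𝕜] E) : E →ₗ[𝕜] E))ᗮ ≤ T.eqLocus 1 := by
  intro x hx
  have h : ∀ y, ⟪T y, x⟫_𝕜 = ⟪y, x⟫_𝕜 := fun y => by
    have : ⟪y - T y, x⟫_𝕜 = 0 :=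
      Submodule.inner_right_of_mem_orthogonal (LinearMap.mem_range_self _ y) hx
    rwa [inner_sub_left, sub_eq_zero, eq_comm] at this
  exact eq_of_norm_le_re_inner_eq_norm_sq (𝕜 := 𝕜) (hT x) (by simp [h])

theorem SatisfiesConditionK.tendsto_pow_apply [CompleteSpace E] {K : ℝ} {T : E →L[𝕜] E}
    (hK : 0 ≤ K) (hT : SatisfiesConditionK K T) {x y : E} (hy : T y = y)
    (hxy : x - y ∈ (T.eqLocus 1)ᗮ) : Tendsto (fun n => (T ^ n) x) atTop (𝓝 y) := by
  have hclosure :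
      x - y ∈ closure (LinearMap.range ((1 - T : E →L[𝕜] E) : E →ₗ[𝕜] E) : Set E) := by
    rw [← Submodule.topologicalClosure_coe, ← Submodule.orthogonal_orthogonal_eq_closure]
    exact Submodule.orthogonal_le
      (T.orthogonal_range_one_sub_le_eqLocus (hT.norm_apply_le hK)) hxy
  have hdiff : Tendsto (fun n => (T ^ n) (x - y)) atTop (𝓝 0) := by
    refine closure_minimal ?_ (T.isClosed_setOf_tendsto_pow_apply_zero
      (hT.lipschitzWith_one hK)) hclosure
    rintro _ ⟨w, rfl⟩
    simpa using hT.tendsto_pow_apply_sub hK w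
  have hpow_y : ∀ n, (T ^ n) y = y := fun n => by
    rw [FunLike.coe_pow_eq_iterate]; exact Function.IsFixedPt.iterate hy n
  simpa only [map_sub, hpow_y, sub_add_cancel, zero_add] using hdiff.add_const y

end InnerProduct

theorem stmt13_general {X : Type*} [NormedAddCommGroup X] [InnerProductSpace ℂ X] [CompleteSpace X]
    (N : ℕ) (Y : Fin N → Submodule ℂ X)
    (P : Fin N → (X →L[ℂ] X))
    (hmem : ∀ k x, P k x ∈ Y k)
    (hfix : ∀ k, ∀ y ∈ Y k, P k y = y)
    (horth : ∀ k x, x - P k x ∈ (Y k)ᗮ)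
    (T : X →L[ℂ] X) (hT : T = (List.ofFn P).reverse.prod)
    (P0 : X →L[ℂ] X)
    (hmem0 : ∀ x, P0 x ∈ ⨅ k, Y k)
    (horth0 : ∀ x, x - P0 x ∈ (⨅ k, Y k)ᗮ) :
    ∀ x : X, Tendsto (fun n : ℕ => ‖(T ^ n) x - P0 x‖) atTop (𝓝 0) := by
  have hP : ∀ Q ∈ (List.ofFn P).reverse, SatisfiesConditionK 1 Q := by
    simp only [List.mem_reverse, List.mem_ofFn, forall_exists_index, forall_apply_eq_imp_iff]
    exact fun k => satisfiesConditionK_one_of_inner_eq_zero fun x =>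
      Submodule.inner_right_of_mem_orthogonal (hmem k x) (horth k x)
  obtain ⟨K, hK0, hK⟩ := exists_satisfiesConditionK_list_prod zero_le_one hP
  have hfixed : T.eqLocus 1 = ⨅ k, Y k := by
    ext x
    change T x = x ↔ _
    rw [hT, SatisfiesConditionK.list_prod_apply_eq_self_iff zero_le_one hP, Submodule.mem_iInf]
    simp only [List.mem_reverse, List.mem_ofFn, forall_exists_index, forall_apply_eq_imp_iff]
    exact forall_congr' fun k => ⟨fun h => h ▸ hmem k x, hfix k x⟩
  intro x
  rw [← hT] at hK
  exact tendsto_iff_norm_sub_tendsto_zero.1 <| hK.tendsto_pow_apply hK0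
    (hfixed ▸ hmem0 x : P0 x ∈ T.eqLocus 1) (hfixed ▸ horth0 x)

/-- Halperin's theorem: for `T = P_N ⋯ P_1` the product of orthogonal projections onto
closed subspaces `Y_1, …, Y_N` (`N ≥ 2`) of a Hilbert space, and `P` the orthogonal
projection onto `Y_1 ∩ ⋯ ∩ Y_N`, one has `‖T^n x - P x‖ → 0` for every `x`. -/
theorem stmt13 {X : Type*} [NormedAddCommGroup X] [InnerProductSpace ℂ X] [CompleteSpace X]
    (N : ℕ) (hN : 2 ≤ N) (Y : Fin N → Submodule ℂ X) (hYc : ∀ k, IsClosed (Y k : Set X))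
    (P : Fin N → (X →L[ℂ] X))
    (hmem : ∀ k x, P k x ∈ Y k)
    (hfix : ∀ k, ∀ y ∈ Y k, P k y = y)
    (horth : ∀ k x, x - P k x ∈ (Y k)ᗮ)
    (T : X →L[ℂ] X) (hT : T = (List.ofFn P).reverse.prod)
    (P0 : X →L[ℂ] X)
    (hmem0 : ∀ x, P0 x ∈ ⨅ k, Y k)
    (hfix0 : ∀ y ∈ ⨅ k, Y k, P0 y = y)
    (horth0 : ∀ x, x - P0 x ∈ (⨅ k, Y k)ᗮ) :
    ∀ x : X, Tendsto (fun n : ℕ => ‖(T ^ n) x - P0 x‖) atTop (𝓝 0) :=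
  stmt13_general N Y P hmem hfix horth T hT P0 hmem0 horth0
end

section
/- Let T be a bounded linear operator on a complex Hilbert space whose numerical range is contained in the Stolz domain D_r, the convex hull of {z : |z| ≤ r} ∪ {1}, for some r ∈ (0,1). Then T is a Ritt operator: there exists C such that ‖(zI − T)⁻¹‖ ≤ C/|z − 1| for all |z| > 1. -/
/-!
For `‖z‖ > 1` the numerical range of `z - T` stays at distance at least `(1 - r) / 2 * ‖z - 1‖`
from `0`: a point `w = (1 - a) + a u` of the Stolz domain (`‖u‖ ≤ r`) is either within `a (1 + r)`
of `1` or at distance at least `a (1 - r)` from the unit circle. A numerical range bounded away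
from `0` by `d` makes an operator coercive, hence invertible with inverse of norm at most `1 / d`.
-/

open scoped InnerProductSpace ComplexConjugate NNReal

def stolzDomain (r : ℝ) : Set ℂ := convexHull ℝ (Metric.closedBall 0 r ∪ {1})

lemma mul_norm_sub_one_le_norm_sub_of_mem_stolzDomain {r : ℝ} (hr0 : 0 ≤ r) (hr1 : r ≤ 1)
    {w z : ℂ} (hw : w ∈ stolzDomain r) (hz : 1 < ‖z‖) : (1 - r) / 2 * ‖z - 1‖ ≤ ‖z - w‖ := by
  rw [stolzDomain, Set.union_singleton, convexHull_insert ⟨0, by simp [hr0]⟩,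
    (convex_closedBall (0 : ℂ) r).convexHull_eq, mem_convexJoin] at hw
  obtain ⟨_, rfl, u, hu, b, a, hb, ha, hab, rfl⟩ := hw
  obtain rfl : b = 1 - a := by linarith
  rw [Metric.mem_closedBall, dist_zero_right] at hu
  set w := (1 - a) • (1 : ℂ) + a • u
  have h_near_one : ‖w - 1‖ ≤ a * (1 + r) := by
    have : w - 1 = a • (u - 1) := by simp only [w, Complex.real_smul]; push_cast; ring
    rw [this, norm_smul, Real.norm_of_nonneg ha]
    gcongr
    exact (norm_sub_le _ _).trans (by rw [norm_one]; linarith)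
  have h_inside : ‖w‖ ≤ 1 - a * (1 - r) := by
    calc ‖w‖ ≤ (1 - a) * 1 + a * r := by
          refine (norm_add_le _ _).trans ?_
          rw [norm_smul, norm_smul, Real.norm_of_nonneg ha, Real.norm_of_nonneg hb, norm_one]
          gcongr
      _ = 1 - a * (1 - r) := by ring
  have h_far_from_circle := norm_sub_norm_le z w
  have h_far_from_one := norm_sub_le_norm_sub_add_norm_sub z w 1
  rcases le_or_gt a (‖z - 1‖ / 2) with h | h <;> nlinarith

theorem ContinuousLinearMap.norm_sq_mul_le_norm_inner_map {𝕜 E : Type*} [RCLike 𝕜]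
    [NormedAddCommGroup E] [InnerProductSpace 𝕜 E] (f : E →L[𝕜] E) {c : ℝ}
    (h : ∀ x, ‖x‖ = 1 → c ≤ ‖⟪f x, x⟫_𝕜‖) (x : E) : ‖x‖ ^ 2 * c ≤ ‖⟪f x, x⟫_𝕜‖ := by
  rcases eq_or_ne x 0 with rfl | hx
  · simp
  have hx_unit : ‖(‖x‖⁻¹ : 𝕜) • x‖ = 1 := by
    rw [norm_smul, norm_inv, RCLike.norm_ofReal, abs_norm,
      inv_mul_cancel₀ (norm_ne_zero_iff.mpr hx)]
  have := h _ hx_unit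
  rw [map_smul, inner_smul_left, inner_smul_right, norm_mul, norm_mul, map_inv₀,
    RCLike.conj_ofReal, norm_inv, RCLike.norm_ofReal, abs_norm] at this
  rwa [← mul_assoc, ← mul_inv, ← sq, inv_mul_eq_div, le_div_iff₀ (by positivity), mul_comm]
    at this

theorem ContinuousLinearMap.norm_inverse_le_of_forall_le_norm_inner_map {𝕜 E : Type*} [RCLike 𝕜]
    [NormedAddCommGroup E] [InnerProductSpace 𝕜 E] [CompleteSpace E] (f : E →L[𝕜] E) {c : ℝ≥0}
    (hc : 0 < c) (h : ∀ x, ‖x‖ ^ 2 * c ≤ ‖⟪f x, x⟫_𝕜‖) : ‖Ring.inverse f‖ ≤ c⁻¹ := by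
  obtain ⟨u, rfl⟩ := isUnit_of_forall_le_norm_inner_map f hc h
  have h_lip : LipschitzWith c⁻¹ ((u⁻¹ : (E →L[𝕜] E)ˣ) : E →L[𝕜] E) :=
    (antilipschitz_of_forall_le_inner_map (u : E →L[𝕜] E) hc h).to_rightInverse
      fun y => by show ((u * u⁻¹ : (E →L[𝕜] E)ˣ) : E →L[𝕜] E) y = y; simp
  simpa using opNorm_le_of_lipschitz h_lip

lemma mul_norm_sub_one_le_norm_inner_algebraMap_sub_apply {X : Type*} [NormedAddCommGroup X]
    [InnerProductSpace ℂ X] {T : X →L[ℂ] X} {r : ℝ} (hr0 : 0 ≤ r) (hr1 : r ≤ 1) {x : X}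
    (hx : ‖x‖ = 1) (hTx : ⟪T x, x⟫_ℂ ∈ stolzDomain r) {z : ℂ} (hz : 1 < ‖z‖) :
    (1 - r) / 2 * ‖z - 1‖ ≤ ‖⟪(algebraMap ℂ (X →L[ℂ] X) z - T) x, x⟫_ℂ‖ := by
  have h_inner : ⟪(algebraMap ℂ (X →L[ℂ] X) z - T) x, x⟫_ℂ = conj z - ⟪T x, x⟫_ℂ := by
    simp [Algebra.algebraMap_eq_smul_one, hx]
  rw [h_inner, ← RCLike.norm_conj (z - 1), map_sub, map_one]
  exact mul_norm_sub_one_le_norm_sub_of_mem_stolzDomain hr0 hr1 hTx (by rwa [RCLike.norm_conj])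

/-- An operator on a Hilbert space whose numerical range lies in a Stolz domain
`D_r = conv(r·closed disc ∪ {1})`, `r ∈ (0,1)`, is a Ritt operator. -/
theorem stmt15 {X : Type*} [NormedAddCommGroup X] [InnerProductSpace ℂ X] [CompleteSpace X]
    (T : X →L[ℂ] X) (r : ℝ) (hr0 : 0 < r) (hr1 : r < 1)
    (hW : ∀ x : X, ‖x‖ = 1 →
      (inner ℂ (T x) x : ℂ) ∈ convexHull ℝ (Metric.closedBall (0 : ℂ) r ∪ {1})) :
    ∃ C : ℝ, 0 < C ∧ ∀ z : ℂ, 1 < ‖z‖ → z ∈ resolventSet ℂ T ∧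
      ‖Ring.inverse (algebraMap ℂ (X →L[ℂ] X) z - T)‖ ≤ C / ‖z - 1‖ := by
  have hr : 0 < 1 - r := sub_pos.2 hr1
  refine ⟨2 / (1 - r), by positivity, fun z hz => ?_⟩
  have hz1 : 0 < ‖z - 1‖ := norm_pos_iff.2 (sub_ne_zero.2 (by rintro rfl; simp at hz))
  set c : ℝ≥0 := ⟨(1 - r) / 2 * ‖z - 1‖, by positivity⟩
  have hc : 0 < c := show (0 : ℝ) < (1 - r) / 2 * ‖z - 1‖ by positivity
  set A := algebraMap ℂ (X →L[ℂ] X) z - T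
  have h_coercive := A.norm_sq_mul_le_norm_inner_map fun x hx =>
    mul_norm_sub_one_le_norm_inner_algebraMap_sub_apply hr0.le hr1.le hx (hW x hx) hz
  refine ⟨A.isUnit_of_forall_le_norm_inner_map hc h_coercive, ?_⟩
  calc ‖Ring.inverse A‖ ≤ ((c⁻¹ : ℝ≥0) : ℝ) :=
        A.norm_inverse_le_of_forall_le_norm_inner_map hc h_coercive
    _ = 2 / (1 - r) / ‖z - 1‖ := by
        rw [NNReal.coe_inv]; show ((1 - r) / 2 * ‖z - 1‖)⁻¹ = _; field_simp
end

section
/- Let T be a power-bounded operator on a complex Banach space with σ(T) ∩ 𝕋 ⊆ {1}, and suppose ‖(e^{iθ}I − T)⁻¹‖ ≤ C|θ|^{−α} for all 0 < |θ| ≤ π, for some C > 0 and α ≥ 1. Then sup_{|λ|>1} ‖(λI − T)⁻¹(I − T)^α‖ < ∞, where (I − T)^α is the fractional power of the sectorial operator I − T (for integer α, simply the α-th power (I − T)^α). -/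
/-!
The Neumann series `R(λ) = ∑ λ⁻ⁿ⁻¹ Tⁿ` gives `‖R(λ)‖ ≤ K / (|λ| - 1)` for `|λ| > 1`, which settles
`|λ| ≥ 2`. Expanding `(1 - T)^α = ((1 - λ) + (λ - T))^α` gives
`R(λ) (1 - T)^α = (1 - λ)^α R(λ) + Q_λ(T)` with `Q_λ` a polynomial whose coefficients stay bounded
for `|λ| ≤ 2`, so it remains to bound `|1 - λ|^α ‖R(λ)‖`. With `r = |λ| - 1` and `θ = arg λ` we have
`|1 - λ| ≤ r + |θ|`. If `|θ| ≤ r`, the Neumann bound gives `(2r)^α K / r ≤ 2^α K`. Otherwise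
`e^{iθ}` lies at distance `r` from `λ`, so the resolvent identity gives
`‖R(λ)‖ ≤ (1 + K) ‖R(e^{iθ})‖ ≤ (1 + K) C |θ|^{-α}`, while `|1 - λ| ≤ 2 |θ|`.
-/

open Finset spectrum

section Resolvent

variable {𝕜 A : Type*} [NormedField 𝕜] [NormedRing A] [NormedAlgebra 𝕜 A]

theorem resolvent_sub_resolvent_eq_smul_mul {a : A} {z w : 𝕜}
    (hz : z ∈ resolventSet 𝕜 a) (hw : w ∈ resolventSet 𝕜 a) :
    resolvent a z - resolvent a w = (w - z) • (resolvent a z * resolvent a w) := by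
  have hsub : (algebraMap 𝕜 A w - a) - (algebraMap 𝕜 A z - a) = algebraMap 𝕜 A (w - z) := by
    rw [map_sub]; abel
  unfold resolvent
  rw [← Algebra.mul_smul_comm, Algebra.smul_def, ← mul_assoc, ← hsub, mul_sub, sub_mul,
    Ring.inverse_mul_cancel _ hz, one_mul, mul_assoc, Ring.mul_inverse_cancel _ hw, mul_one]

theorem norm_resolvent_le_of_norm_sub_mul_le {a : A} {z w : 𝕜} {K : ℝ}
    (hz : z ∈ resolventSet 𝕜 a) (hw : w ∈ resolventSet 𝕜 a)
    (h : ‖w - z‖ * ‖resolvent a z‖ ≤ K) :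
    ‖resolvent a z‖ ≤ (1 + K) * ‖resolvent a w‖ := by
  have hid : resolvent a z = resolvent a w + (w - z) • (resolvent a z * resolvent a w) := by
    rw [← resolvent_sub_resolvent_eq_smul_mul hz hw]; abel
  calc ‖resolvent a z‖ = ‖resolvent a w + (w - z) • (resolvent a z * resolvent a w)‖ :=
        congrArg _ hid
    _ ≤ ‖resolvent a w‖ + ‖w - z‖ * ‖resolvent a z‖ * ‖resolvent a w‖ := by
        refine (norm_add_le _ _).trans ?_
        rw [norm_smul, mul_assoc]
        gcongr
        exact norm_mul_le _ _
    _ ≤ ‖resolvent a w‖ + K * ‖resolvent a w‖ := by gcongr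
    _ = (1 + K) * ‖resolvent a w‖ := by ring

variable [CompleteSpace A]

theorem mem_resolventSet_and_norm_resolvent_le_of_norm_pow_le {a : A} {K : ℝ}
    (hK : ∀ n : ℕ, ‖a ^ n‖ ≤ K) {z : 𝕜} (hz : 1 < ‖z‖) :
    z ∈ resolventSet 𝕜 a ∧ ‖resolvent a z‖ ≤ K / (‖z‖ - 1) := by
  have hz0 : z ≠ 0 := norm_pos_iff.mp (one_pos.trans hz)
  set x := z⁻¹ • a
  have hr : ‖z‖⁻¹ < 1 := inv_lt_one_of_one_lt₀ hz
  have hx : ∀ n : ℕ, ‖x ^ n‖ ≤ K * ‖z‖⁻¹ ^ n := fun n => by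
    rw [smul_pow, norm_smul, norm_pow, norm_inv, mul_comm]
    exact mul_le_mul_of_nonneg_right (hK n) (by positivity)
  have hgeom : HasSum (fun n : ℕ => K * ‖z‖⁻¹ ^ n) (K * (1 - ‖z‖⁻¹)⁻¹) :=
    (hasSum_geometric_of_lt_one (by positivity) hr).mul_left K
  have hs : Summable (x ^ ·) := .of_norm_bounded hgeom.summable hx
  have hfac : algebraMap 𝕜 A z - a = z • (1 - x) := by
    rw [smul_sub, smul_inv_smul₀ hz0, Algebra.algebraMap_eq_smul_one]
  have hright : (algebraMap 𝕜 A z - a) * (z⁻¹ • ∑' n, x ^ n) = 1 := by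
    rw [hfac, smul_mul_smul_comm, mul_inv_cancel₀ hz0, hs.one_sub_mul_tsum_pow, one_smul]
  have hleft : (z⁻¹ • ∑' n, x ^ n) * (algebraMap 𝕜 A z - a) = 1 := by
    rw [hfac, smul_mul_smul_comm, inv_mul_cancel₀ hz0, hs.tsum_pow_mul_one_sub, one_smul]
  have hmem : z ∈ resolventSet 𝕜 a := mem_resolventSet_of_left_right_inverse hright hleft
  have heq : resolvent a z = z⁻¹ • ∑' n, x ^ n := by
    rw [← Ring.inverse_mul_cancel_left _ (z⁻¹ • ∑' n, x ^ n) hmem, hright, mul_one]; rfl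
  refine ⟨hmem, ?_⟩
  calc ‖resolvent a z‖ ≤ ‖z‖⁻¹ * (K * (1 - ‖z‖⁻¹)⁻¹) := by
        rw [heq, norm_smul, norm_inv]
        exact mul_le_mul_of_nonneg_left (tsum_of_norm_bounded hgeom hx) (by positivity)
    _ = K / (‖z‖ - 1) := by
        have : ‖z‖ - 1 ≠ 0 := by linarith
        field_simp

end Resolvent

theorem resolvent_mul_one_sub_pow {R A : Type*} [CommRing R] [Ring A] [Algebra R A] {a : A}
    {z : R} (hz : z ∈ resolventSet R a) (n : ℕ) :
    resolvent a z * (1 - a) ^ n =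
      (1 - z) ^ n • resolvent a z + ∑ i ∈ range n, (1 - z) ^ (n - 1 - i) • (1 - a) ^ i := by
  have hcomm : Commute (1 - a) (algebraMap R A (1 - z)) := (Algebra.commutes _ _).symm
  have hdiff : (1 - a) - algebraMap R A (1 - z) = algebraMap R A z - a := by
    rw [map_sub, map_one]; abel
  have hgeom := hcomm.mul_geom_sum₂ n
  rw [hdiff] at hgeom
  have hpow : (1 - a) ^ n = algebraMap R A (1 - z) ^ n + (algebraMap R A z - a) *
      ∑ i ∈ range n, (1 - a) ^ i * algebraMap R A (1 - z) ^ (n - 1 - i) := by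
    rw [hgeom]; abel
  unfold resolvent
  rw [hpow, mul_add, Ring.inverse_mul_cancel_left _ _ hz, ← map_pow, ← Algebra.commutes,
    ← Algebra.smul_def]
  congr 1
  refine sum_congr rfl fun i _ => ?_
  rw [← map_pow, ← Algebra.commutes, ← Algebra.smul_def]

namespace Complex

theorem norm_sub_exp_arg_mul_I (z : ℂ) : ‖z - exp (arg z * I)‖ = |‖z‖ - 1| := by
  have hpolar : z - exp (arg z * I) = (‖z‖ - 1) * exp (arg z * I) := by
    rw [sub_one_mul, norm_mul_exp_arg_mul_I]
  rw [hpolar, norm_mul, norm_exp_ofReal_mul_I, mul_one, ← ofReal_one, ← ofReal_sub,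
    norm_real, Real.norm_eq_abs]

theorem norm_one_sub_le_abs_norm_sub_one_add_abs_arg (z : ℂ) :
    ‖1 - z‖ ≤ |‖z‖ - 1| + |arg z| := by
  calc ‖1 - z‖ = ‖(z - exp (arg z * I)) + (exp (I * arg z) - 1)‖ := by
        rw [← norm_neg, mul_comm I]; congr 1; ring
    _ ≤ |‖z‖ - 1| + |arg z| := by
        rw [← norm_sub_exp_arg_mul_I, ← Real.norm_eq_abs (arg z)]
        exact (norm_add_le _ _).trans (by gcongr; exact Real.norm_exp_I_mul_ofReal_sub_one_le)

end Complex

section PowerBounded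

open Complex

variable {A : Type*} [NormedRing A] [NormedAlgebra ℂ A] [CompleteSpace A] {a : A} {K C : ℝ}
  {α : ℕ} {z : ℂ}

theorem norm_one_sub_pow_mul_norm_resolvent_le_of_abs_arg_le (hK : ∀ n : ℕ, ‖a ^ n‖ ≤ K)
    (hα : 1 ≤ α) (hz : 1 < ‖z‖) (hz₂ : ‖z‖ ≤ 2) (harg : |arg z| ≤ ‖z‖ - 1) :
    ‖1 - z‖ ^ α * ‖resolvent a z‖ ≤ 2 ^ α * K := by
  have hK₀ : 0 ≤ K := (norm_nonneg _).trans (hK 0)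
  set r := ‖z‖ - 1
  have hr : 0 < r := sub_pos.mpr hz
  have hdist : ‖1 - z‖ ≤ 2 * r := by
    have := norm_one_sub_le_abs_norm_sub_one_add_abs_arg z
    rw [abs_of_pos hr] at this
    linarith
  calc ‖1 - z‖ ^ α * ‖resolvent a z‖ ≤ (2 * r) ^ α * (K / r) := by
        gcongr
        exact (mem_resolventSet_and_norm_resolvent_le_of_norm_pow_le hK hz).2
    _ = 2 ^ α * (r ^ (α - 1) * K) := by
        obtain ⟨m, rfl⟩ := Nat.exists_eq_add_of_le' hα
        rw [mul_pow, pow_succ, Nat.add_sub_cancel]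
        field_simp
        ring
    _ ≤ 2 ^ α * K := by
        gcongr
        exact mul_le_of_le_one_left hK₀ (pow_le_one₀ hr.le (by linarith))

theorem norm_one_sub_pow_mul_norm_resolvent_le_of_lt_abs_arg (hK : ∀ n : ℕ, ‖a ^ n‖ ≤ K)
    (hres : ∀ θ : ℝ, θ ≠ 0 → |θ| ≤ Real.pi →
      exp (θ * I) ∈ resolventSet ℂ a ∧ ‖resolvent a (exp (θ * I))‖ ≤ C / |θ| ^ α)
    (hz : 1 < ‖z‖) (harg : ‖z‖ - 1 < |arg z|) :
    ‖1 - z‖ ^ α * ‖resolvent a z‖ ≤ 2 ^ α * ((1 + K) * C) := by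
  have hK₀ : 0 ≤ K := (norm_nonneg _).trans (hK 0)
  set r := ‖z‖ - 1
  set θ := arg z
  have hr : 0 < r := sub_pos.mpr hz
  have hθ : 0 < |θ| := hr.trans harg
  obtain ⟨hz_mem, hRz⟩ := mem_resolventSet_and_norm_resolvent_le_of_norm_pow_le hK hz
  obtain ⟨hμ_mem, hRμ⟩ := hres θ (abs_pos.mp hθ) (abs_arg_le_pi z)
  have hdist : ‖1 - z‖ ≤ 2 * |θ| := by
    have := norm_one_sub_le_abs_norm_sub_one_add_abs_arg z
    rw [abs_of_pos hr] at this
    linarith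
  have hcompare : ‖resolvent a z‖ ≤ (1 + K) * ‖resolvent a (exp (θ * I))‖ := by
    refine norm_resolvent_le_of_norm_sub_mul_le hz_mem hμ_mem ?_
    calc ‖exp (θ * I) - z‖ * ‖resolvent a z‖ ≤ r * (K / r) := by
          rw [norm_sub_rev, norm_sub_exp_arg_mul_I, abs_of_pos hr]
          gcongr
      _ = K := by field_simp
  calc ‖1 - z‖ ^ α * ‖resolvent a z‖ ≤ (2 * |θ|) ^ α * ((1 + K) * (C / |θ| ^ α)) := by
        gcongr
        exact hcompare.trans (by gcongr)
    _ = 2 ^ α * ((1 + K) * C) := by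
        rw [mul_pow]
        field_simp

theorem norm_resolvent_mul_one_sub_pow_le (hK : ∀ n : ℕ, ‖a ^ n‖ ≤ K) (hα : 1 ≤ α)
    (hres : ∀ θ : ℝ, θ ≠ 0 → |θ| ≤ Real.pi →
      exp (θ * I) ∈ resolventSet ℂ a ∧ ‖resolvent a (exp (θ * I))‖ ≤ C / |θ| ^ α)
    (hz : 1 < ‖z‖) (hz₂ : ‖z‖ ≤ 2) :
    ‖resolvent a z * (1 - a) ^ α‖ ≤
      2 ^ α * max K ((1 + K) * C) + ∑ i ∈ range α, 3 ^ (α - 1 - i) * ‖(1 - a) ^ i‖ := by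
  have hz_mem := (mem_resolventSet_and_norm_resolvent_le_of_norm_pow_le hK hz).1
  have hz₃ : ‖1 - z‖ ≤ 3 := (norm_sub_le _ _).trans (by rw [norm_one]; linarith)
  have hscalar : ‖1 - z‖ ^ α * ‖resolvent a z‖ ≤ 2 ^ α * max K ((1 + K) * C) := by
    rcases le_or_gt |arg z| (‖z‖ - 1) with harg | harg
    · exact (norm_one_sub_pow_mul_norm_resolvent_le_of_abs_arg_le hK hα hz hz₂ harg).trans
        (by gcongr; exact le_max_left _ _)
    · exact (norm_one_sub_pow_mul_norm_resolvent_le_of_lt_abs_arg hK hres hz harg).trans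
        (by gcongr; exact le_max_right _ _)
  rw [resolvent_mul_one_sub_pow hz_mem]
  refine (norm_add_le _ _).trans (add_le_add ?_ ?_)
  · rwa [norm_smul, norm_pow]
  · refine (norm_sum_le _ _).trans (sum_le_sum fun i _ => ?_)
    rw [norm_smul, norm_pow]
    gcongr

end PowerBounded

theorem stmt17_general {X : Type*} [NormedAddCommGroup X] [NormedSpace ℂ X] [CompleteSpace X]
    (T : X →L[ℂ] X) (hpb : ∃ K : ℝ, ∀ n : ℕ, ‖T ^ n‖ ≤ K)
    (α : ℕ) (hα : 1 ≤ α) (C : ℝ)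
    (hres : ∀ θ : ℝ, θ ≠ 0 → |θ| ≤ Real.pi →
      Complex.exp (θ * Complex.I) ∈ resolventSet ℂ T ∧
        ‖Ring.inverse (algebraMap ℂ (X →L[ℂ] X) (Complex.exp (θ * Complex.I)) - T)‖ ≤
          C / |θ| ^ α) :
    ∃ M : ℝ, ∀ l : ℂ, 1 < ‖l‖ →
      ‖Ring.inverse (algebraMap ℂ (X →L[ℂ] X) l - T) * (1 - T) ^ α‖ ≤ M := by
  obtain ⟨K, hK⟩ := hpb
  have hK₀ : 0 ≤ K := (norm_nonneg _).trans (hK 0)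
  refine ⟨max (K * ‖(1 - T) ^ α‖)
    (2 ^ α * max K ((1 + K) * C) + ∑ i ∈ range α, 3 ^ (α - 1 - i) * ‖(1 - T) ^ i‖),
    fun l hl => ?_⟩
  rcases le_or_gt ‖l‖ 2 with hl₂ | hl₂
  · exact le_max_of_le_right (norm_resolvent_mul_one_sub_pow_le hK hα hres hl hl₂)
  · refine le_max_of_le_left ((norm_mul_le _ _).trans ?_)
    gcongr
    calc ‖resolvent T l‖ ≤ K / (‖l‖ - 1) :=
          (mem_resolventSet_and_norm_resolvent_le_of_norm_pow_le hK hl).2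
      _ ≤ K := div_le_self hK₀ (by linarith)

/-- Seifert's Lemma 3.9: if `T` is power-bounded with `σ(T) ∩ 𝕋 ⊆ {1}` and
`‖(e^{iθ}I - T)⁻¹‖ ≤ C |θ|^{-α}` for `0 < |θ| ≤ π` (here `α` a positive integer), then
`sup_{|λ| > 1} ‖(λI - T)⁻¹ (I - T)^α‖ < ∞`. -/
theorem stmt17 {X : Type*} [NormedAddCommGroup X] [NormedSpace ℂ X] [CompleteSpace X]
    (T : X →L[ℂ] X) (hpb : ∃ K : ℝ, ∀ n : ℕ, ‖T ^ n‖ ≤ K)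
    (hspec : ∀ z ∈ spectrum ℂ T, ‖z‖ = 1 → z = 1)
    (α : ℕ) (hα : 1 ≤ α) (C : ℝ) (hC : 0 < C)
    (hres : ∀ θ : ℝ, θ ≠ 0 → |θ| ≤ Real.pi →
      Complex.exp (θ * Complex.I) ∈ resolventSet ℂ T ∧
        ‖Ring.inverse (algebraMap ℂ (X →L[ℂ] X) (Complex.exp (θ * Complex.I)) - T)‖ ≤
          C / |θ| ^ α) :
    ∃ M : ℝ, ∀ l : ℂ, 1 < ‖l‖ →
      ‖Ring.inverse (algebraMap ℂ (X →L[ℂ] X) l - T) * (1 - T) ^ α‖ ≤ M :=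
  stmt17_general T hpb α hα C hres
end
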